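/- arXiv:1405.1513 — 4 statements merged into one kernel-verified Lean document; each statement's English description precedes it below -/
import Mathlib

section
/- (Theorem 5.) Let Z and H be finite alphabets, m ≥ 1, P a probability mass function on Z, and Q a learning kernel from Z^m to pmfs on H that is invariant under permutations of the training set, i.e., Q(·|S∘σ) = Q(·|S) for every S ∈ Z^m and every permutation σ of {1,…,m}. Let I(S_m, H) denote the mutual information (in nats) between the training set S_m ∼ P^{⊗m} and the inferred hypothesis H, and let I_P(Z_trn, H) denote the mutual affinity between a uniformly drawn training example and H. Then I_P(Z_trn, H) ≤ √(I(S_m, H)/(2m)). -/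
/-!
The joint law of `(Z_trn, H)` is the average over `i` of the joint laws `μᵢ` of `(Sᵢ, H)`, each
of which has marginals `P` and the law of `H`. Convexity of total variation, Pinsker's inequality
for each `μᵢ` and concavity of `√` bound the affinity by `√(∑ᵢ I(Sᵢ; H) / (2m))`. Pinsker's
inequality follows from the pointwise bound `3 (t - 1)² ≤ (2t + 4) (t log t - t + 1)` and
Cauchy–Schwarz. Since the `Sᵢ` are independent, `∑ᵢ I(Sᵢ; H) ≤ I(S; H)`: the difference is the
relative entropy of the law of `(S, H)` with respect to the law under which the `Sᵢ` are
conditionally independent given `H` with the same conditional marginals, a law of total mass one.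
-/

/-- Total variation distance between two pmfs: `1 - ∑ min`. -/
noncomputable def tv {A : Type*} (p q : A → ℝ) : ℝ := 1 - ∑' a, min (p a) (q a)

/-- `p` is a probability mass function: nonnegative and summing to `1`. -/
def IsPMF {A : Type*} (p : A → ℝ) : Prop := (∀ a, 0 ≤ p a) ∧ HasSum p 1

/-- Product pmf `P^{⊗m}` of `m` i.i.d. draws from `P`. -/
noncomputable def prodPMF {Z : Type*} (m : ℕ) (P : Z → ℝ) (S : Fin m → Z) : ℝ :=
  ∏ i, P (S i)

/-- Joint pmf of a uniformly drawn training example `Z_trn` and the inferred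
hypothesis `H`: `μ(z,h) = ∑_S P^{⊗m}(S) · (1/m)∑_i 1{S_i = z} · Q(h|S)`. -/
noncomputable def jointZH {Z H : Type*} (m : ℕ) (P : Z → ℝ)
    (Q : (Fin m → Z) → H → ℝ) (z : Z) (h : H) : ℝ :=
  haveI := Classical.decEq Z
  ∑' S : Fin m → Z,
    prodPMF m P S * ((1 / (m : ℝ)) * ∑ i, if S i = z then (1 : ℝ) else 0) * Q S h

/-- Marginal of `Z_trn` under the joint pmf `jointZH`. -/
noncomputable def margZ {Z H : Type*} (m : ℕ) (P : Z → ℝ)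
    (Q : (Fin m → Z) → H → ℝ) (z : Z) : ℝ :=
  ∑' h : H, jointZH m P Q z h

/-- Marginal of the hypothesis `H` under the joint pmf `jointZH`. -/
noncomputable def margH {Z H : Type*} (m : ℕ) (P : Z → ℝ)
    (Q : (Fin m → Z) → H → ℝ) (h : H) : ℝ :=
  ∑' z : Z, jointZH m P Q z h

/-- Mutual affinity `I(Z_trn, H) = ‖μ_Z ⊗ μ_H, μ‖`. -/
noncomputable def affinity {Z H : Type*} (m : ℕ) (P : Z → ℝ)
    (Q : (Fin m → Z) → H → ℝ) : ℝ :=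
  tv (fun p : Z × H => margZ m P Q p.1 * margH m P Q p.2)
    (fun p : Z × H => jointZH m P Q p.1 p.2)

/-- True risk `R(𝓛) = ∑_S P^{⊗m}(S) ∑_h Q(h|S) ∑_z P(z)·L(h,z)`. -/
noncomputable def trueRisk {Z H : Type*} (m : ℕ) (P : Z → ℝ)
    (Q : (Fin m → Z) → H → ℝ) (L : H → Z → ℝ) : ℝ :=
  ∑' S : Fin m → Z, prodPMF m P S * ∑' h : H, Q S h * ∑' z : Z, P z * L h z

/-- Empirical risk `R_emp(𝓛) = ∑_S P^{⊗m}(S) ∑_h Q(h|S)·(1/m)∑_i L(h,S_i)`. -/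
noncomputable def empRisk {Z H : Type*} (m : ℕ) (P : Z → ℝ)
    (Q : (Fin m → Z) → H → ℝ) (L : H → Z → ℝ) : ℝ :=
  ∑' S : Fin m → Z, prodPMF m P S * ∑' h : H, Q S h * ((1 / (m : ℝ)) * ∑ i, L h (S i))

/-- Learning capacity `C^(m)(𝓛) = sup_P I(Z_trn, H)`. -/
noncomputable def capacity {Z H : Type*} (m : ℕ)
    (Q : (Fin m → Z) → H → ℝ) : ℝ :=
  sSup {c : ℝ | ∃ P : Z → ℝ, IsPMF P ∧ c = affinity m P Q}

open Real
open InformationTheory (klFun)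

theorem le_of_hasDerivAt_of_mul_sub_one_nonneg {f f' : ℝ → ℝ}
    (hf : ∀ x, 0 < x → HasDerivAt f (f' x) x) (hf' : ∀ x, 0 < x → 0 ≤ (x - 1) * f' x)
    {t : ℝ} (ht : 0 < t) : f 1 ≤ f t := by
  have hcont : ContinuousOn f (Set.Ioi 0) := fun x hx =>
    (hf x hx).continuousAt.continuousWithinAt
  rcases le_total t 1 with ht1 | ht1
  · refine antitoneOn_of_hasDerivWithinAt_nonpos (f' := f') (convex_Icc t 1)
      (hcont.mono fun x hx => ht.trans_le hx.1) (fun x hx => ?_) (fun x hx => ?_)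
      ⟨le_rfl, ht1⟩ ⟨ht1, le_rfl⟩ ht1 <;> rw [interior_Icc] at hx
    · exact (hf x (ht.trans hx.1)).hasDerivWithinAt
    · exact nonpos_of_mul_nonneg_right (hf' x (ht.trans hx.1)) (by linarith [hx.2])
  · refine monotoneOn_of_hasDerivWithinAt_nonneg (f' := f') (convex_Icc 1 t)
      (hcont.mono fun x hx => one_pos.trans_le hx.1) (fun x hx => ?_) (fun x hx => ?_)
      ⟨le_rfl, ht1⟩ ⟨ht1, le_rfl⟩ ht1 <;> rw [interior_Icc] at hx
    · exact (hf x (one_pos.trans hx.1)).hasDerivWithinAt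
    · exact nonneg_of_mul_nonneg_right (hf' x (one_pos.trans hx.1)) (by linarith [hx.1])

theorem sub_one_mul_add_one_mul_log_sub_nonneg {t : ℝ} (ht : 0 < t) :
    0 ≤ (t - 1) * ((t + 1) * log t - 2 * (t - 1)) := by
  have hderiv : ∀ x, 0 < x → HasDerivAt (fun x => (x + 1) * log x - 2 * (x - 1))
      (log x + 1 / x - 1) x := fun x hx => by
    refine (((hasDerivAt_id' x).add_const 1).fun_mul (hasDerivAt_log hx.ne')).fun_sub
      (((hasDerivAt_id' x).sub_const 1).const_mul 2) |>.congr_deriv ?_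
    field_simp
    ring
  have hmono : MonotoneOn (fun x => (x + 1) * log x - 2 * (x - 1)) (Set.Ioi 0) :=
    monotoneOn_of_hasDerivWithinAt_nonneg (convex_Ioi 0)
      (fun x hx => (hderiv x hx).continuousAt.continuousWithinAt)
      (fun x hx => (hderiv x (interior_subset hx)).hasDerivWithinAt)
      (fun x hx => by
        have := one_sub_inv_le_log_of_pos (interior_subset hx : 0 < x)
        rw [one_div]; linarith)
  rcases le_total t 1 with ht1 | ht1
  · have := hmono ht (Set.mem_Ioi.2 one_pos) ht1
    simp only [log_one] at this
    exact mul_nonneg_of_nonpos_of_nonpos (by linarith) (by linarith)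
  · have := hmono (Set.mem_Ioi.2 one_pos) (Set.mem_Ioi.2 (one_pos.trans_le ht1)) ht1
    simp only [log_one] at this
    exact mul_nonneg (by linarith) (by linarith)

theorem three_mul_sq_sub_one_le_mul_klFun {t : ℝ} (ht : 0 ≤ t) :
    3 * (t - 1) ^ 2 ≤ (2 * t + 4) * klFun t := by
  rcases ht.eq_or_lt with rfl | ht
  · norm_num [InformationTheory.klFun_zero]
  have hderiv : ∀ x, 0 < x → HasDerivAt (fun x => (2 * x + 4) * klFun x - 3 * (x - 1) ^ 2)
      (4 * ((x + 1) * log x - 2 * (x - 1))) x := fun x hx => by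
    refine ((((hasDerivAt_id' x).const_mul 2).add_const 4).fun_mul
      (InformationTheory.hasDerivAt_klFun hx.ne')).fun_sub
      ((((hasDerivAt_id' x).sub_const 1).fun_pow 2).const_mul 3) |>.congr_deriv ?_
    simp only [InformationTheory.klFun_apply]
    ring
  have := le_of_hasDerivAt_of_mul_sub_one_nonneg hderiv (fun x hx => by
    have := sub_one_mul_add_one_mul_log_sub_nonneg hx; nlinarith) ht
  simp only [InformationTheory.klFun_one] at this
  linarith

section DiscreteKL

variable {α : Type*} [Fintype α]

/-- Since `Real.log 0 = 0`, terms with `p a = 0` vanish, while a term with `q a = 0 < p a` is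
junk; hence the hypotheses `q a = 0 → p a = 0` below. -/
noncomputable def discreteKL (p q : α → ℝ) : ℝ := ∑ a, p a * log (p a / q a)

theorem discreteKL_eq_tsum_ite {p : α → ℝ} (hp : ∀ a, 0 ≤ p a) (q : α → ℝ) :
    discreteKL p q = ∑' a, if 0 < p a then p a * log (p a / q a) else 0 := by
  rw [tsum_fintype]
  refine Finset.sum_congr rfl fun a _ => ?_
  split_ifs with ha
  · rfl
  · simp [le_antisymm (not_lt.1 ha) (hp a)]

theorem mul_log_div_eq_mul_klFun_add {a b : ℝ} (hab : b = 0 → a = 0) :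
    a * log (a / b) = b * klFun (a / b) + a - b := by
  rw [InformationTheory.klFun_apply, mul_sub, mul_add, ← mul_assoc, mul_div_cancel_of_imp' hab]
  ring

theorem discreteKL_eq_sum_mul_klFun_add {p q : α → ℝ} (hpq : ∀ a, q a = 0 → p a = 0) :
    discreteKL p q = ∑ a, q a * klFun (p a / q a) + ∑ a, p a - ∑ a, q a := by
  simp only [discreteKL, mul_log_div_eq_mul_klFun_add (hpq _), Finset.sum_sub_distrib,
    Finset.sum_add_distrib]

theorem sum_sub_sum_le_discreteKL {p q : α → ℝ} (hp : ∀ a, 0 ≤ p a) (hq : ∀ a, 0 ≤ q a)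
    (hpq : ∀ a, q a = 0 → p a = 0) : ∑ a, p a - ∑ a, q a ≤ discreteKL p q := by
  rw [discreteKL_eq_sum_mul_klFun_add hpq]
  have := Finset.sum_nonneg fun a (_ : a ∈ Finset.univ) =>
    mul_nonneg (hq a) (InformationTheory.klFun_nonneg (div_nonneg (hp a) (hq a)))
  linarith

theorem three_mul_sq_sub_le_mul_klFun {a b : ℝ} (ha : 0 ≤ a) (hb : 0 ≤ b)
    (hab : b = 0 → a = 0) : 3 * (a - b) ^ 2 ≤ (2 * a + 4 * b) * (b * klFun (a / b)) := by
  rcases hb.eq_or_lt with rfl | hb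
  · simp [hab rfl]
  obtain ⟨t, ht, rfl⟩ : ∃ t, 0 ≤ t ∧ a = t * b := ⟨a / b, div_nonneg ha hb.le, by field_simp⟩
  rw [mul_div_cancel_right₀ t hb.ne']
  have := mul_le_mul_of_nonneg_left (three_mul_sq_sub_one_le_mul_klFun ht) (sq_nonneg b)
  linarith

theorem tv_eq_sum_abs_sub_div_two {p q : α → ℝ} (hp : ∑ a, p a = 1) (hq : ∑ a, q a = 1) :
    tv p q = (∑ a, |p a - q a|) / 2 := by
  have hmin : ∀ x y : ℝ, min x y = (x + y - |x - y|) / 2 := fun x y => by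
    linarith [min_add_max x y, max_sub_min_eq_abs' x y]
  simp only [tv, tsum_fintype, hmin, ← Finset.sum_div, Finset.sum_sub_distrib,
    Finset.sum_add_distrib, hp, hq]
  ring

theorem tv_le_sqrt_discreteKL {p q : α → ℝ} (hp0 : ∀ a, 0 ≤ p a) (hq0 : ∀ a, 0 ≤ q a)
    (hp1 : ∑ a, p a = 1) (hq1 : ∑ a, q a = 1) (hpq : ∀ a, q a = 0 → p a = 0) :
    tv q p ≤ √(discreteKL p q / 2) := by
  set ψ := fun a => q a * klFun (p a / q a)
  have hψ0 : ∀ a, 0 ≤ ψ a := fun a =>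
    mul_nonneg (hq0 a) (InformationTheory.klFun_nonneg (div_nonneg (hp0 a) (hq0 a)))
  have hw0 : ∀ a, 0 ≤ (2 * p a + 4 * q a) / 3 := fun a => by linarith [hp0 a, hq0 a]
  have hKL : discreteKL p q = ∑ a, ψ a := by
    rw [discreteKL_eq_sum_mul_klFun_add hpq, hp1, hq1, add_sub_cancel_right]
  have hw : ∑ a, (2 * p a + 4 * q a) / 3 = 2 := by
    rw [← Finset.sum_div, Finset.sum_add_distrib, ← Finset.mul_sum, ← Finset.mul_sum, hp1, hq1]
    norm_num
  have hpt : ∀ a, |q a - p a| ≤ √(ψ a) * √((2 * p a + 4 * q a) / 3) := fun a => by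
    rw [abs_sub_comm, ← sqrt_sq_eq_abs, ← sqrt_mul (hψ0 a)]
    refine sqrt_le_sqrt ?_
    have := three_mul_sq_sub_le_mul_klFun (hp0 a) (hq0 a) (hpq a)
    linarith
  calc tv q p = (∑ a, |q a - p a|) / 2 := tv_eq_sum_abs_sub_div_two hq1 hp1
    _ ≤ (√(∑ a, ψ a) * √(∑ a, (2 * p a + 4 * q a) / 3)) / 2 := by
      gcongr
      exact (Finset.sum_le_sum fun a _ => hpt a).trans (sum_sqrt_mul_sqrt_le _ hψ0 hw0)
    _ = √(discreteKL p q / 2) := by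
      rw [hw, ← hKL, sqrt_div' _ zero_le_two]
      field_simp
      rw [sq_sqrt zero_le_two]

theorem tv_sum_mul_le {ι : Type*} [Fintype ι] (q : α → ℝ) (p : ι → α → ℝ) {w : ι → ℝ}
    (hw0 : ∀ i, 0 ≤ w i) (hw1 : ∑ i, w i = 1) :
    tv q (fun a => ∑ i, w i * p i a) ≤ ∑ i, w i * tv q (p i) := by
  have hmin : ∀ a, ∑ i, w i * min (q a) (p i a) ≤ min (q a) (∑ i, w i * p i a) := fun a =>
    le_min
      (calc ∑ i, w i * min (q a) (p i a) ≤ ∑ i, w i * q a :=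
            Finset.sum_le_sum fun i _ => mul_le_mul_of_nonneg_left (min_le_left _ _) (hw0 i)
        _ = q a := by rw [← Finset.sum_mul, hw1, one_mul])
      (Finset.sum_le_sum fun i _ => mul_le_mul_of_nonneg_left (min_le_right _ _) (hw0 i))
  have hrhs : ∑ i, w i * tv q (p i) = 1 - ∑ a, ∑ i, w i * min (q a) (p i a) := by
    simp only [tv, tsum_fintype, mul_sub, mul_one, Finset.sum_sub_distrib, hw1, Finset.mul_sum]
    rw [Finset.sum_comm]
  rw [hrhs, tv, tsum_fintype]
  linarith [Finset.sum_le_sum fun a (_ : a ∈ Finset.univ) => hmin a]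

end DiscreteKL

section Marginals

variable {α β : Type*}

def fstMarginal [Fintype β] (ν : α × β → ℝ) (a : α) : ℝ := ∑ b, ν (a, b)

def sndMarginal [Fintype α] (ν : α × β → ℝ) (b : β) : ℝ := ∑ a, ν (a, b)

theorem le_fstMarginal [Fintype β] {ν : α × β → ℝ} (hν : ∀ x, 0 ≤ ν x) (x : α × β) :
    ν x ≤ fstMarginal ν x.1 :=
  Finset.single_le_sum (f := fun b => ν (x.1, b)) (fun _ _ => hν _) (Finset.mem_univ x.2)

theorem le_sndMarginal [Fintype α] {ν : α × β → ℝ} (hν : ∀ x, 0 ≤ ν x) (x : α × β) :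
    ν x ≤ sndMarginal ν x.2 :=
  Finset.single_le_sum (f := fun a => ν (a, x.2)) (fun _ _ => hν _) (Finset.mem_univ x.1)

variable [Fintype α] [Fintype β]

def marginalProd (ν : α × β → ℝ) (x : α × β) : ℝ := fstMarginal ν x.1 * sndMarginal ν x.2

noncomputable def discreteMutualInfo (ν : α × β → ℝ) : ℝ := discreteKL ν (marginalProd ν)

theorem sum_eq_sum_fstMarginal (ν : α × β → ℝ) : ∑ x, ν x = ∑ a, fstMarginal ν a :=
  Fintype.sum_prod_type ν

theorem sum_eq_sum_sndMarginal (ν : α × β → ℝ) : ∑ x, ν x = ∑ b, sndMarginal ν b :=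
  Fintype.sum_prod_type_right ν

theorem sum_marginalProd (ν : α × β → ℝ) : ∑ x, marginalProd ν x = (∑ x, ν x) ^ 2 := by
  simp only [marginalProd, fstMarginal, sndMarginal, Fintype.sum_prod_type, ← Finset.sum_mul_sum]
  rw [Finset.sum_comm (f := fun a b => ν (b, a))]
  ring

theorem marginalProd_nonneg {ν : α × β → ℝ} (hν : ∀ x, 0 ≤ ν x) (x : α × β) :
    0 ≤ marginalProd ν x :=
  mul_nonneg (Finset.sum_nonneg fun _ _ => hν _) (Finset.sum_nonneg fun _ _ => hν _)

theorem eq_zero_of_marginalProd_eq_zero {ν : α × β → ℝ} (hν : ∀ x, 0 ≤ ν x) {x : α × β}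
    (hx : marginalProd ν x = 0) : ν x = 0 := by
  refine le_antisymm ?_ (hν x)
  rcases mul_eq_zero.1 hx with h | h
  · exact h ▸ le_fstMarginal hν x
  · exact h ▸ le_sndMarginal hν x

theorem discreteMutualInfo_nonneg {ν : α × β → ℝ} (hν0 : ∀ x, 0 ≤ ν x) (hν1 : ∑ x, ν x = 1) :
    0 ≤ discreteMutualInfo ν := by
  have := sum_sub_sum_le_discreteKL hν0 (marginalProd_nonneg hν0)
    fun _ => eq_zero_of_marginalProd_eq_zero hν0
  rw [sum_marginalProd, hν1] at this
  simpa [discreteMutualInfo] using this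

theorem tv_marginalProd_le_sqrt_discreteMutualInfo {ν : α × β → ℝ} (hν0 : ∀ x, 0 ≤ ν x)
    (hν1 : ∑ x, ν x = 1) : tv (marginalProd ν) ν ≤ √(discreteMutualInfo ν / 2) :=
  tv_le_sqrt_discreteKL hν0 (marginalProd_nonneg hν0) hν1
    (by rw [sum_marginalProd, hν1]; norm_num) fun _ => eq_zero_of_marginalProd_eq_zero hν0

theorem marginalProd_sum_mul {ι : Type*} [Fintype ι] {w : ι → ℝ} (hw : ∑ i, w i = 1)
    {p : ι → α × β → ℝ} {f : α → ℝ} {g : β → ℝ} (hf : ∀ i, fstMarginal (p i) = f)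
    (hg : ∀ i, sndMarginal (p i) = g) :
    marginalProd (fun x => ∑ i, w i * p i x) = fun x => f x.1 * g x.2 := by
  have hsum : ∀ c : ℝ, ∑ i, w i * c = c := fun c => by rw [← Finset.sum_mul, hw, one_mul]
  ext x
  have hfx : ∀ i, ∑ b, p i (x.1, b) = f x.1 := fun i => congrFun (hf i) x.1
  have hgx : ∀ i, ∑ a, p i (a, x.2) = g x.2 := fun i => congrFun (hg i) x.2
  simp only [marginalProd, fstMarginal, sndMarginal]
  rw [Finset.sum_comm, Finset.sum_comm (f := fun a i => w i * p i (a, x.2))]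
  simp only [← Finset.mul_sum, hfx, hgx, hsum]

end Marginals

section Coordinates

variable {Z H : Type*} [Fintype Z] [DecidableEq Z] {m : ℕ}

def coordJoint (ν : (Fin m → Z) × H → ℝ) (i : Fin m) (x : Z × H) : ℝ :=
  ∑ S, if S i = x.1 then ν (S, x.2) else 0

theorem sum_coordJoint_mul [Fintype H] (ν : (Fin m → Z) × H → ℝ) (i : Fin m)
    (g : Z × H → ℝ) : ∑ x, coordJoint ν i x * g x = ∑ y, ν y * g (y.1 i, y.2) := by
  simp only [coordJoint, Finset.sum_mul, ite_mul, zero_mul]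
  rw [Finset.sum_comm, Fintype.sum_prod_type]
  refine Finset.sum_congr rfl fun S _ => ?_
  rw [Fintype.sum_prod_type, Finset.sum_comm]
  simp

theorem coordJoint_nonneg {ν : (Fin m → Z) × H → ℝ} (hν : ∀ y, 0 ≤ ν y) (i : Fin m)
    (x : Z × H) : 0 ≤ coordJoint ν i x :=
  Finset.sum_nonneg fun S _ => by split_ifs <;> simp [hν]

theorem le_coordJoint {ν : (Fin m → Z) × H → ℝ} (hν : ∀ y, 0 ≤ ν y) (i : Fin m)
    (y : (Fin m → Z) × H) : ν y ≤ coordJoint ν i (y.1 i, y.2) := by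
  have := Finset.single_le_sum (f := fun S => if S i = y.1 i then ν (S, y.2) else 0)
    (fun S _ => by split_ifs <;> simp [hν]) (Finset.mem_univ y.1)
  simpa [coordJoint] using this

theorem sndMarginal_coordJoint (ν : (Fin m → Z) × H → ℝ) (i : Fin m) :
    sndMarginal (coordJoint ν i) = sndMarginal ν := by
  ext h
  simp only [sndMarginal, coordJoint]
  rw [Finset.sum_comm]
  simp

theorem sum_ite_apply_eq_prod {P : Z → ℝ} (hP1 : ∑ z, P z = 1) (i : Fin m) (z : Z) :
    ∑ S : Fin m → Z, (if S i = z then ∏ j, P (S j) else 0) = P z := by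
  have := Finset.prod_univ_sum
    (Function.update (fun _ => (Finset.univ : Finset Z)) i {z}) fun _ => P
  rw [Fintype.piFinset_update_singleton_eq_filter_piFinset_eq _ i (Finset.mem_univ z),
    Finset.sum_filter, Fintype.piFinset_univ] at this
  rw [← this, Finset.prod_eq_single i]
  · simp
  · intro j _ hj
    simp [Function.update_of_ne hj, hP1]
  · simp

theorem fstMarginal_coordJoint [Fintype H] {P : Z → ℝ} (hP1 : ∑ z, P z = 1)
    {ν : (Fin m → Z) × H → ℝ} (hfst : ∀ S, fstMarginal ν S = ∏ j, P (S j)) (i : Fin m) :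
    fstMarginal (coordJoint ν i) = P := by
  ext z
  have hfst' : ∀ S, ∑ h, ν (S, h) = ∏ j, P (S j) := hfst
  simp only [fstMarginal, coordJoint]
  rw [Finset.sum_comm]
  simp only [Finset.sum_ite_irrel, Finset.sum_const_zero, hfst']
  exact sum_ite_apply_eq_prod hP1 i z

/-- The law of `(S, H)` under which `S₁, …, Sₘ` are conditionally independent given `H`, each
with its conditional law under `ν`. -/
noncomputable def condIndepCoupling (ν : (Fin m → Z) × H → ℝ) (y : (Fin m → Z) × H) : ℝ :=
  sndMarginal ν y.2 * ∏ i, (coordJoint ν i (y.1 i, y.2) / sndMarginal ν y.2)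

theorem sndMarginal_condIndepCoupling (ν : (Fin m → Z) × H → ℝ) :
    sndMarginal (condIndepCoupling ν) = sndMarginal ν := by
  ext h
  have hcoord : ∀ i, ∑ z, coordJoint ν i (z, h) / sndMarginal ν h =
      sndMarginal ν h / sndMarginal ν h := fun i => by
    rw [← Finset.sum_div, ← sndMarginal_coordJoint ν i]; rfl
  change ∑ S, condIndepCoupling ν (S, h) = sndMarginal ν h
  simp only [condIndepCoupling]
  rw [← Finset.mul_sum, ← Fintype.prod_sum fun i z => coordJoint ν i (z, h) / sndMarginal ν h]
  simp only [hcoord]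
  by_cases h₂ : sndMarginal ν h = 0 <;> simp [h₂]

theorem condIndepCoupling_nonneg {ν : (Fin m → Z) × H → ℝ} (hν : ∀ y, 0 ≤ ν y)
    (y : (Fin m → Z) × H) : 0 ≤ condIndepCoupling ν y := by
  have h₂ : 0 ≤ sndMarginal ν y.2 := Finset.sum_nonneg fun _ _ => hν _
  exact mul_nonneg h₂ (Finset.prod_nonneg fun i _ => div_nonneg (coordJoint_nonneg hν i _) h₂)

theorem condIndepCoupling_pos {ν : (Fin m → Z) × H → ℝ} (hν : ∀ y, 0 ≤ ν y)
    {y : (Fin m → Z) × H} (hy : 0 < ν y) : 0 < condIndepCoupling ν y := by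
  have h₂ := hy.trans_le (le_sndMarginal hν y)
  exact mul_pos h₂ (Finset.prod_pos fun i _ => div_pos (hy.trans_le (le_coordJoint hν i y)) h₂)

theorem log_div_marginalProd_sub_sum_eq [Fintype H] {P : Z → ℝ} {ν : (Fin m → Z) × H → ℝ}
    (hν : ∀ y, 0 ≤ ν y) (hfst : ∀ S, fstMarginal ν S = ∏ j, P (S j))
    {y : (Fin m → Z) × H} (hy : 0 < ν y) :
    log (ν y / marginalProd ν y) -
        ∑ i, log (coordJoint ν i (y.1 i, y.2) / (P (y.1 i) * sndMarginal ν y.2)) =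
      log (ν y / condIndepCoupling ν y) := by
  have h₁ : ∏ j, P (y.1 j) ≠ 0 := hfst y.1 ▸ (hy.trans_le (le_fstMarginal hν y)).ne'
  have hP : ∀ j, P (y.1 j) ≠ 0 := fun j => Finset.prod_ne_zero_iff.1 h₁ j (Finset.mem_univ j)
  have h₂ : sndMarginal ν y.2 ≠ 0 := (hy.trans_le (le_sndMarginal hν y)).ne'
  have hc : ∀ i, coordJoint ν i (y.1 i, y.2) ≠ 0 := fun i =>
    (hy.trans_le (le_coordJoint hν i y)).ne'
  have hr : ∀ i, coordJoint ν i (y.1 i, y.2) / sndMarginal ν y.2 ≠ 0 := fun i =>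
    div_ne_zero (hc i) h₂
  rw [log_div hy.ne' (condIndepCoupling_pos hν hy).ne', marginalProd, hfst,
    log_div hy.ne' (mul_ne_zero h₁ h₂), condIndepCoupling,
    log_mul h₁ h₂, log_mul h₂ (Finset.prod_ne_zero_iff.2 fun i _ => hr i),
    log_prod fun j _ => hP j, log_prod fun i _ => hr i]
  simp only [log_div (hc _) (mul_ne_zero (hP _) h₂), log_div (hc _) h₂, log_mul (hP _) h₂,
    Finset.sum_sub_distrib, Finset.sum_add_distrib]
  ring

theorem sum_discreteMutualInfo_coordJoint_le [Fintype H] {P : Z → ℝ} (hP1 : ∑ z, P z = 1)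
    {ν : (Fin m → Z) × H → ℝ} (hν : ∀ y, 0 ≤ ν y)
    (hfst : ∀ S, fstMarginal ν S = ∏ j, P (S j)) :
    ∑ i, discreteMutualInfo (coordJoint ν i) ≤ discreteMutualInfo ν := by
  have hmarg : ∀ i, marginalProd (coordJoint ν i) = fun x => P x.1 * sndMarginal ν x.2 :=
    fun i => by
      ext x
      simp only [marginalProd, fstMarginal_coordJoint hP1 hfst, sndMarginal_coordJoint]
  have hgap : discreteMutualInfo ν - ∑ i, discreteMutualInfo (coordJoint ν i) =
      discreteKL ν (condIndepCoupling ν) := by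
    simp only [discreteMutualInfo, hmarg, discreteKL, sum_coordJoint_mul]
    rw [Finset.sum_comm, ← Finset.sum_sub_distrib]
    refine Finset.sum_congr rfl fun y _ => ?_
    rcases (hν y).eq_or_lt with h0 | hpos
    · simp [← h0]
    · rw [← Finset.mul_sum, ← mul_sub, log_div_marginalProd_sub_sum_eq hν hfst hpos]
  have hsum : ∑ y, condIndepCoupling ν y = ∑ y, ν y := by
    rw [sum_eq_sum_sndMarginal, sum_eq_sum_sndMarginal ν, sndMarginal_condIndepCoupling]
  have := sum_sub_sum_le_discreteKL hν (condIndepCoupling_nonneg hν) fun y hy =>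
    ((hν y).eq_or_lt.resolve_right fun hpos => (condIndepCoupling_pos hν hpos).ne' hy).symm
  linarith

end Coordinates

theorem jointZH_eq_sum_coordJoint {Z H : Type*} [Fintype Z] [DecidableEq Z] {m : ℕ}
    {P : Z → ℝ} {Q : (Fin m → Z) → H → ℝ} {ν : (Fin m → Z) × H → ℝ}
    (hν : ∀ S h, ν (S, h) = prodPMF m P S * Q S h) (z : Z) (h : H) :
    jointZH m P Q z h = ∑ i, (m : ℝ)⁻¹ * coordJoint ν i (z, h) := by
  simp only [jointZH, coordJoint, tsum_fintype, ← Finset.mul_sum]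
  rw [Finset.sum_comm, Finset.mul_sum]
  refine Finset.sum_congr rfl fun S _ => ?_
  simp only [hν, Finset.mul_sum, Finset.sum_mul]
  refine Finset.sum_congr rfl fun i _ => ?_
  split_ifs <;> ring

theorem affinity_eq_tv_marginalProd {Z H : Type*} [Fintype Z] [Fintype H] (m : ℕ)
    (P : Z → ℝ) (Q : (Fin m → Z) → H → ℝ) :
    affinity m P Q =
      tv (marginalProd fun x => jointZH m P Q x.1 x.2) fun x => jointZH m P Q x.1 x.2 := by
  simp only [affinity, margZ, margH, tsum_fintype]
  rfl

theorem affinity_le_sqrt_sum_discreteMutualInfo_coordJoint {Z H : Type*} [Fintype Z]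
    [Fintype H] [DecidableEq Z] {m : ℕ} (hm : m ≠ 0) {P : Z → ℝ} (hP1 : ∑ z, P z = 1)
    {Q : (Fin m → Z) → H → ℝ} {ν : (Fin m → Z) × H → ℝ}
    (hν : ∀ S h, ν (S, h) = prodPMF m P S * Q S h) (hν0 : ∀ y, 0 ≤ ν y)
    (hfst : ∀ S, fstMarginal ν S = ∏ j, P (S j)) :
    affinity m P Q ≤ √((∑ i, discreteMutualInfo (coordJoint ν i)) / (2 * m)) := by
  have hw : ∑ _ : Fin m, (m : ℝ)⁻¹ = 1 := by simp [hm]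
  have hp1 : ∀ i, ∑ x, coordJoint ν i x = 1 := fun i => by
    rw [sum_eq_sum_fstMarginal, fstMarginal_coordJoint hP1 hfst, hP1]
  have hI : ∀ i, 0 ≤ discreteMutualInfo (coordJoint ν i) / 2 := fun i =>
    div_nonneg (discreteMutualInfo_nonneg (coordJoint_nonneg hν0 i) (hp1 i)) zero_le_two
  set q : Z × H → ℝ := fun x => P x.1 * sndMarginal ν x.2
  have hmarg : ∀ i, marginalProd (coordJoint ν i) = q := fun i => by
    ext x
    simp only [marginalProd, fstMarginal_coordJoint hP1 hfst, sndMarginal_coordJoint, q]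
  calc affinity m P Q = tv q fun x => ∑ i, (m : ℝ)⁻¹ * coordJoint ν i x := by
        rw [affinity_eq_tv_marginalProd]
        simp only [jointZH_eq_sum_coordJoint hν]
        rw [marginalProd_sum_mul hw (fstMarginal_coordJoint hP1 hfst) (sndMarginal_coordJoint ν)]
    _ ≤ ∑ i, (m : ℝ)⁻¹ * tv q (coordJoint ν i) := tv_sum_mul_le _ _ (fun _ => by positivity) hw
    _ ≤ ∑ i, (m : ℝ)⁻¹ * √(discreteMutualInfo (coordJoint ν i) / 2) := by
        gcongr with i
        rw [← hmarg i]
        exact tv_marginalProd_le_sqrt_discreteMutualInfo (coordJoint_nonneg hν0 i) (hp1 i)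
    _ ≤ √(∑ i, (m : ℝ)⁻¹ * (discreteMutualInfo (coordJoint ν i) / 2)) :=
        strictConcaveOn_sqrt.concaveOn.le_map_sum (fun _ _ => by positivity) hw fun i _ => hI i
    _ = √((∑ i, discreteMutualInfo (coordJoint ν i)) / (2 * m)) := by
        rw [← Finset.mul_sum, ← Finset.sum_div]
        ring_nf

theorem stmt15_general {Z H : Type*} [Fintype Z] [Fintype H] (m : ℕ) (hm : 1 ≤ m)
    (P : Z → ℝ) (hP : IsPMF P)
    (Q : (Fin m → Z) → H → ℝ) (hQ : ∀ S, IsPMF (Q S))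
    (ν : (Fin m → Z) × H → ℝ) (hν : ∀ S h, ν (S, h) = prodPMF m P S * Q S h)
    (ν₁ : (Fin m → Z) → ℝ) (hν₁ : ∀ S, ν₁ S = ∑' h : H, ν (S, h))
    (ν₂ : H → ℝ) (hν₂ : ∀ h, ν₂ h = ∑' S : Fin m → Z, ν (S, h))
    (MI : ℝ)
    (hMI : MI = ∑' p : (Fin m → Z) × H,
      if 0 < ν p then ν p * Real.log (ν p / (ν₁ p.1 * ν₂ p.2)) else 0) :
    affinity m P Q ≤ Real.sqrt (MI / (2 * m)) := by
  classical
  obtain rfl : ν₁ = fstMarginal ν := funext fun S => by rw [hν₁, tsum_fintype]; rfl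
  obtain rfl : ν₂ = sndMarginal ν := funext fun h => by rw [hν₂, tsum_fintype]; rfl
  have hP1 : ∑ z, P z = 1 := (hasSum_fintype P).unique hP.2
  have hν0 : ∀ y, 0 ≤ ν y := fun y => hν y.1 y.2 ▸
    mul_nonneg (Finset.prod_nonneg fun j _ => hP.1 _) ((hQ _).1 _)
  have hfst : ∀ S, fstMarginal ν S = ∏ j, P (S j) := fun S => by
    simp only [fstMarginal, hν, ← Finset.mul_sum, (hasSum_fintype _).unique (hQ S).2, mul_one]
    rfl
  have hMI' : MI = discreteMutualInfo ν := by
    rw [hMI, discreteMutualInfo, discreteKL_eq_tsum_ite hν0]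
    rfl
  calc affinity m P Q ≤ √((∑ i, discreteMutualInfo (coordJoint ν i)) / (2 * m)) :=
        affinity_le_sqrt_sum_discreteMutualInfo_coordJoint (by omega) hP1 hν hν0 hfst
    _ ≤ √(MI / (2 * m)) := by
        rw [hMI']
        gcongr
        exact sum_discreteMutualInfo_coordJoint_le hP1 hν0 hfst

/-- Theorem 5: for a permutation-invariant learning machine on
finite alphabets, the mutual affinity between a uniformly drawn training
example and the hypothesis is bounded by `√(I(S_m, H)/(2m))`, where
`I(S_m, H)` is the mutual information (in nats) between the training set and
the inferred hypothesis. -/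
theorem stmt15 {Z H : Type*} [Fintype Z] [Fintype H] (m : ℕ) (hm : 1 ≤ m)
    (P : Z → ℝ) (hP : IsPMF P)
    (Q : (Fin m → Z) → H → ℝ) (hQ : ∀ S, IsPMF (Q S))
    (hperm : ∀ (S : Fin m → Z) (σ : Equiv.Perm (Fin m)), Q (S ∘ σ) = Q S)
    (ν : (Fin m → Z) × H → ℝ) (hν : ∀ S h, ν (S, h) = prodPMF m P S * Q S h)
    (ν₁ : (Fin m → Z) → ℝ) (hν₁ : ∀ S, ν₁ S = ∑' h : H, ν (S, h))
    (ν₂ : H → ℝ) (hν₂ : ∀ h, ν₂ h = ∑' S : Fin m → Z, ν (S, h))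
    (MI : ℝ)
    (hMI : MI = ∑' p : (Fin m → Z) × H,
      if 0 < ν p then ν p * Real.log (ν p / (ν₁ p.1 * ν₂ p.2)) else 0) :
    affinity m P Q ≤ Real.sqrt (MI / (2 * m)) :=
  stmt15_general m hm P hP Q hQ ν hν ν₁ hν₁ ν₂ hν₂ MI hMI
end

section
/- (Corollary 5.) Let Z and H be finite alphabets, m ≥ 1, P a probability mass function on Z, and Q a learning kernel from Z^m to pmfs on H that is invariant under permutations of the training set. Let 𝐇(H) = −∑_{h : μ_H(h)>0} μ_H(h)·log μ_H(h) be the Shannon entropy (in nats) of the inferred hypothesis H, with μ_H its marginal pmf. Then the mutual affinity satisfies I_P(Z_trn, H) ≤ √(𝐇(H)/(2m)) ≤ √(log|H|/(2m)). -/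
/-!
By exchangeability, the law of `(Z_trn, H)` is the law of `(S i, H)` for any fixed coordinate
`i`; its marginals are `P` and the law `ν` of `H`. Pinsker's inequality bounds the affinity by
`√(KL / 2)`, where `KL` is the mutual information of `S i` and `H`. Since the coordinates of `S`
are independent, the `m` (equal) informations of `S i` and `H` add up to at most the information
of `S` and `H`: the defect is the divergence from the law under which the coordinates are
conditionally independent given `H`. That information is at most `𝐇(H) ≤ log |H|`.
-/

open Real InformationTheory Finset Function

/-- `KL(q ‖ p)` on a finite type. Since `log (a / 0) = 0`, it is only meaningful when
`p x = 0 → q x = 0`. -/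
noncomputable def klDivFin {A : Type*} [Fintype A] (q p : A → ℝ) : ℝ :=
  ∑ x, q x * log (q x / p x)

section Pointwise

variable {x y t : ℝ}

lemma mul_log_div_sub_add_eq (hxy : y = 0 → x = 0) :
    x * log (x / y) - x + y = y * klFun (x / y) := by
  rcases eq_or_ne y 0 with rfl | hy
  · simp [hxy rfl]
  · rw [klFun_apply]
    field_simp
    ring

lemma sub_le_mul_log_div (hx : 0 ≤ x) (hy : 0 ≤ y) (hxy : y = 0 → x = 0) :
    x - y ≤ x * log (x / y) := by
  have := mul_nonneg hy (klFun_nonneg (div_nonneg hx hy))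
  rw [← mul_log_div_sub_add_eq hxy] at this
  linarith

lemma monotoneOn_add_one_mul_log_sub :
    MonotoneOn (fun t => (t + 1) * log t - 2 * (t - 1)) (Set.Ioi 0) := by
  have hd : ∀ x ∈ Set.Ioi (0 : ℝ),
      HasDerivAt (fun t => (t + 1) * log t - 2 * (t - 1)) (log x + x⁻¹ - 1) x := by
    intro x hx
    have hx : x ≠ 0 := ne_of_gt hx
    refine ((((hasDerivAt_id x).add_const 1).mul (hasDerivAt_log hx)).sub
      (((hasDerivAt_id x).sub_const 1).const_mul 2)).congr_deriv ?_
    simp only [id]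
    field_simp
    ring
  refine monotoneOn_of_hasDerivWithinAt_nonneg (f' := fun x => log x + x⁻¹ - 1) (convex_Ioi 0)
    (fun x hx => (hd x hx).continuousAt.continuousWithinAt) (fun x hx => ?_) (fun x hx => ?_)
  · rw [interior_Ioi] at hx ⊢
    exact (hd x hx).hasDerivWithinAt
  · rw [interior_Ioi] at hx
    linarith [one_sub_inv_le_log_of_pos hx]

/-- The derivative of the difference of the two sides is `4 ((t + 1) log t - 2 (t - 1))`, which
changes sign from `-` to `+` at `t = 1`. -/
lemma three_mul_sq_sub_one_le (ht : 0 ≤ t) : 3 * (t - 1) ^ 2 ≤ (2 * t + 4) * klFun t := by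
  set g : ℝ → ℝ := fun t => (t + 1) * log t - 2 * (t - 1)
  set f : ℝ → ℝ := fun t => (2 * t + 4) * klFun t - 3 * (t - 1) ^ 2
  have hf : Continuous f := by fun_prop
  have hd : ∀ x, 0 < x → HasDerivWithinAt f (4 * g x) (Set.Ioi 0) x := by
    intro x hx
    refine HasDerivAt.hasDerivWithinAt ?_
    refine ((((hasDerivAt_id x).const_mul 2).add_const 4).mul (hasDerivAt_klFun hx.ne')).sub
      ((((hasDerivAt_id x).sub_const 1).pow 2).const_mul 3) |>.congr_deriv ?_
    simp only [g, id, klFun_apply]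
    ring
  have hg1 : g 1 = 0 := by simp [g]
  have h1 : (1 : ℝ) ∈ Set.Ioi 0 := Set.mem_Ioi.2 one_pos
  have hanti : AntitoneOn f (Set.Icc 0 1) := by
    refine antitoneOn_of_hasDerivWithinAt_nonpos (f' := fun x => 4 * g x) (convex_Icc 0 1)
      hf.continuousOn (fun x hx => ?_) (fun x hx => ?_) <;> simp only [interior_Icc] at hx ⊢
    · exact (hd x hx.1).mono Set.Ioo_subset_Ioi_self
    · linarith [monotoneOn_add_one_mul_log_sub hx.1 h1 hx.2.le]
  have hmono : MonotoneOn f (Set.Ici 1) := by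
    refine monotoneOn_of_hasDerivWithinAt_nonneg (f' := fun x => 4 * g x) (convex_Ici 1)
      hf.continuousOn (fun x hx => ?_) (fun x hx => ?_) <;> simp only [interior_Ici] at hx ⊢
    · exact (hd x (one_pos.trans hx)).mono (Set.Ioi_subset_Ioi zero_le_one)
    · linarith [monotoneOn_add_one_mul_log_sub h1 (Set.mem_Ioi.2 (one_pos.trans hx)) hx.le]
  have hf1 : f 1 = 0 := by simp [f, klFun_one]
  suffices 0 ≤ f t by simpa [f] using this
  rcases le_total t 1 with h | h
  · exact hf1 ▸ hanti ⟨ht, h⟩ ⟨zero_le_one, le_rfl⟩ h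
  · exact hf1 ▸ hmono (Set.mem_Ici.2 le_rfl) h h

lemma three_mul_sq_sub_le (hx : 0 ≤ x) (hy : 0 ≤ y) (hxy : y = 0 → x = 0) :
    3 * (x - y) ^ 2 ≤ (2 * x + 4 * y) * (x * log (x / y) - x + y) := by
  rcases hy.eq_or_lt with rfl | hy
  · simp [hxy rfl]
  rw [mul_log_div_sub_add_eq hxy]
  have key := mul_le_mul_of_nonneg_left (three_mul_sq_sub_one_le (div_nonneg hx hy.le))
    (sq_nonneg y)
  calc 3 * (x - y) ^ 2 = y ^ 2 * (3 * (x / y - 1) ^ 2) := by field_simp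
    _ ≤ y ^ 2 * ((2 * (x / y) + 4) * klFun (x / y)) := key
    _ = (2 * x + 4 * y) * (y * klFun (x / y)) := by field_simp

end Pointwise

section Finite

variable {A : Type*} [Fintype A] {p q : A → ℝ}

lemma IsPMF.sum_eq_one (hp : IsPMF p) : ∑ a, p a = 1 :=
  (hasSum_fintype p).unique hp.2

lemma sum_sub_sum_le_klDivFin (hp : ∀ x, 0 ≤ p x) (hq : ∀ x, 0 ≤ q x)
    (hpq : ∀ x, p x = 0 → q x = 0) : ∑ x, q x - ∑ x, p x ≤ klDivFin q p := by
  rw [← sum_sub_distrib]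
  exact sum_le_sum fun x _ => sub_le_mul_log_div (hq x) (hp x) (hpq x)

lemma tv_le_sqrt_klDivFin (hp : ∀ x, 0 ≤ p x) (hq : ∀ x, 0 ≤ q x) (hp1 : ∑ x, p x = 1)
    (hq1 : ∑ x, q x = 1) (hpq : ∀ x, p x = 0 → q x = 0) :
    tv p q ≤ √(klDivFin q p / 2) := by
  have htv : tv p q = (∑ x, |q x - p x|) / 2 := by
    have hmin : ∀ x, min (p x) (q x) = (p x + q x - |q x - p x|) / 2 := fun x => by
      rcases le_total (p x) (q x) with h | h
      · rw [min_eq_left h, abs_of_nonneg (sub_nonneg.2 h)]; ring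
      · rw [min_eq_right h, abs_of_nonpos (sub_nonpos.2 h)]; ring
    rw [tv, tsum_fintype, sum_congr rfl fun x _ => hmin x, ← sum_div, sum_sub_distrib,
      sum_add_distrib, hp1, hq1]
    ring
  have hkl : klDivFin q p = ∑ x, (q x * log (q x / p x) - q x + p x) := by
    rw [sum_add_distrib, sum_sub_distrib, hp1, hq1, klDivFin]
    ring
  have hweights : ∑ x, (2 * q x + 4 * p x) / 3 = 2 := by
    rw [← sum_div, sum_add_distrib, ← mul_sum, ← mul_sum, hp1, hq1]
    norm_num
  -- Cauchy–Schwarz, with the weights `(2 q + 4 p) / 3` that make the pointwise bound work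
  have hcs : (∑ x, |q x - p x|) ^ 2 ≤ klDivFin q p * 2 := by
    rw [hkl, ← hweights]
    refine sum_sq_le_sum_mul_sum_of_sq_le_mul _
      (fun x _ => by linarith [sub_le_mul_log_div (hq x) (hp x) (hpq x)])
      (fun x _ => by linarith [hp x, hq x]) (fun x _ => ?_)
    rw [sq_abs]
    linarith [three_mul_sq_sub_le (hq x) (hp x) (hpq x)]
  rw [htv]
  exact Real.le_sqrt_of_sq_le (by linarith)

lemma neg_tsum_ite_mul_log_eq_sum_negMulLog (hp : ∀ x, 0 ≤ p x) :
    -∑' x, (if 0 < p x then p x * log (p x) else 0) = ∑ x, negMulLog (p x) := by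
  rw [tsum_fintype, ← sum_neg_distrib]
  refine sum_congr rfl fun x _ => ?_
  rcases (hp x).eq_or_lt with h0 | hpos
  · simp [← h0]
  · simp [hpos, negMulLog]

lemma sum_negMulLog_le_log_card (hp : ∀ x, 0 ≤ p x) (hp1 : ∑ x, p x = 1) :
    ∑ x, negMulLog (p x) ≤ log (Fintype.card A) := by
  have hA : (0 : ℝ) < Fintype.card A := by
    have : Nonempty A := by
      by_contra h
      simp [not_nonempty_iff.1 h] at hp1
    exact_mod_cast Fintype.card_pos
  have hjensen := concaveOn_negMulLog.le_map_sum (t := univ)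
    (w := fun _ => (Fintype.card A : ℝ)⁻¹) (p := p) (fun _ _ => by positivity)
    (by simp [hA.ne']) (fun x _ => hp x)
  simp only [smul_eq_mul, ← mul_sum, hp1, mul_one] at hjensen
  rw [negMulLog, log_inv] at hjensen
  have := mul_le_mul_of_nonneg_left hjensen hA.le
  field_simp at this
  linarith

lemma klDivFin_le_sum_negMulLog {B : Type*} [Fintype B] {f : A → B → ℝ} {α : A → ℝ}
    (hf : ∀ a b, 0 ≤ f a b) (hfα : ∀ a b, f a b ≤ α a) :
    klDivFin (uncurry f) (fun x => α x.1 * ∑ a, f a x.2) ≤ ∑ b, negMulLog (∑ a, f a b) := by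
  have key : ∀ a b,
      f a b * log (f a b / (α a * ∑ a', f a' b)) ≤ -(f a b * log (∑ a', f a' b)) := by
    intro a b
    rcases (hf a b).eq_or_lt with h0 | hpos
    · simp [← h0]
    have hν : 0 < ∑ a', f a' b :=
      hpos.trans_le (single_le_sum (fun a' _ => hf a' b) (mem_univ a))
    have hα : 0 < α a := hpos.trans_le (hfα a b)
    rw [log_div hpos.ne' (by positivity), log_mul hα.ne' hν.ne']
    nlinarith [log_le_log hpos (hfα a b)]
  calc klDivFin (uncurry f) (fun x => α x.1 * ∑ a, f a x.2)
      ≤ ∑ a, ∑ b, -(f a b * log (∑ a', f a' b)) := by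
        rw [klDivFin, Fintype.sum_prod_type]
        exact sum_le_sum fun a _ => sum_le_sum fun b _ => key a b
    _ = ∑ b, negMulLog (∑ a, f a b) := by
        rw [sum_comm]
        simp only [sum_neg_distrib, ← sum_mul, negMulLog, neg_mul]

end Finite

section LearningMachine

variable {Z H ι : Type*} {P : Z → ℝ} {Q : (ι → Z) → H → ℝ} [Fintype ι]

def sampleHypJoint (P : Z → ℝ) (Q : (ι → Z) → H → ℝ) (S : ι → Z) (h : H) : ℝ :=
  (∏ i, P (S i)) * Q S h

lemma sampleHypJoint_nonneg (hP0 : ∀ z, 0 ≤ P z) (hQ0 : ∀ S h, 0 ≤ Q S h) (S : ι → Z)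
    (h : H) : 0 ≤ sampleHypJoint P Q S h :=
  mul_nonneg (prod_nonneg fun i _ => hP0 (S i)) (hQ0 S h)

variable [Fintype Z] [DecidableEq ι]

def hypMarginal (P : Z → ℝ) (Q : (ι → Z) → H → ℝ) (h : H) : ℝ :=
  ∑ S, sampleHypJoint P Q S h

lemma hypMarginal_nonneg (hP0 : ∀ z, 0 ≤ P z) (hQ0 : ∀ S h, 0 ≤ Q S h) (h : H) :
    0 ≤ hypMarginal P Q h :=
  sum_nonneg fun S _ => sampleHypJoint_nonneg hP0 hQ0 S h

lemma sampleHypJoint_le_hypMarginal (hP0 : ∀ z, 0 ≤ P z) (hQ0 : ∀ S h, 0 ≤ Q S h)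
    (S : ι → Z) (h : H) : sampleHypJoint P Q S h ≤ hypMarginal P Q h :=
  single_le_sum (fun S' _ => sampleHypJoint_nonneg hP0 hQ0 S' h) (mem_univ S)

lemma sum_hypMarginal [Fintype H] (hP1 : ∑ z, P z = 1) (hQ1 : ∀ S, ∑ h, Q S h = 1) :
    ∑ h, hypMarginal P Q h = 1 := by
  simp only [hypMarginal, sampleHypJoint]
  rw [sum_comm]
  simp only [← mul_sum, hQ1, mul_one]
  rw [← Fintype.prod_sum fun _ z => P z]
  simp [hP1]

noncomputable def sampleHypInfo [Fintype H] (P : Z → ℝ) (Q : (ι → Z) → H → ℝ) : ℝ :=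
  klDivFin (uncurry (sampleHypJoint P Q)) (fun x => (∏ i, P (x.1 i)) * hypMarginal P Q x.2)

lemma sampleHypInfo_le_sum_negMulLog [Fintype H] (hP0 : ∀ z, 0 ≤ P z)
    (hQ0 : ∀ S h, 0 ≤ Q S h) (hQ1 : ∀ S, ∑ h, Q S h = 1) :
    sampleHypInfo P Q ≤ ∑ h, negMulLog (hypMarginal P Q h) :=
  klDivFin_le_sum_negMulLog (sampleHypJoint_nonneg hP0 hQ0) fun S h =>
    mul_le_of_le_one_right (prod_nonneg fun i _ => hP0 (S i))
      ((single_le_sum (fun h' _ => hQ0 S h') (mem_univ h)).trans_eq (hQ1 S))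

variable [DecidableEq Z]

def coordHypJoint (P : Z → ℝ) (Q : (ι → Z) → H → ℝ) (i : ι) (z : Z) (h : H) : ℝ :=
  ∑ S, if S i = z then sampleHypJoint P Q S h else 0

noncomputable def condIndepJoint (P : Z → ℝ) (Q : (ι → Z) → H → ℝ) (S : ι → Z) (h : H) :
    ℝ :=
  hypMarginal P Q h * ∏ i, (coordHypJoint P Q i (S i) h / hypMarginal P Q h)

lemma coordHypJoint_nonneg (hP0 : ∀ z, 0 ≤ P z) (hQ0 : ∀ S h, 0 ≤ Q S h) (i : ι) (z : Z)
    (h : H) : 0 ≤ coordHypJoint P Q i z h :=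
  sum_nonneg fun S _ => by
    split_ifs
    exacts [sampleHypJoint_nonneg hP0 hQ0 S h, le_rfl]

lemma sampleHypJoint_le_coordHypJoint (hP0 : ∀ z, 0 ≤ P z) (hQ0 : ∀ S h, 0 ≤ Q S h) (i : ι)
    (S : ι → Z) (h : H) : sampleHypJoint P Q S h ≤ coordHypJoint P Q i (S i) h := by
  have := single_le_sum (fun S' _ => ?_) (mem_univ S)
    (f := fun S' => if S' i = S i then sampleHypJoint P Q S' h else 0)
  · simpa [coordHypJoint] using this
  · split_ifs
    exacts [sampleHypJoint_nonneg hP0 hQ0 S' h, le_rfl]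

lemma sum_coordHypJoint (i : ι) (h : H) : ∑ z, coordHypJoint P Q i z h = hypMarginal P Q h := by
  simp only [coordHypJoint]
  rw [sum_comm]
  simp [hypMarginal]

lemma coordHypJoint_le_hypMarginal (hP0 : ∀ z, 0 ≤ P z) (hQ0 : ∀ S h, 0 ≤ Q S h) (i : ι)
    (z : Z) (h : H) : coordHypJoint P Q i z h ≤ hypMarginal P Q h :=
  sum_coordHypJoint (P := P) (Q := Q) i h ▸
    single_le_sum (fun z' _ => coordHypJoint_nonneg hP0 hQ0 i z' h) (mem_univ z)

lemma coordHypJoint_eq_zero_of_eq_zero {z : Z} (hz : P z = 0) (i : ι) (h : H) :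
    coordHypJoint P Q i z h = 0 :=
  sum_eq_zero fun S _ => by
    split_ifs with hS
    · rw [sampleHypJoint, prod_eq_zero (mem_univ i) (by rwa [hS]), zero_mul]
    · rfl

lemma coordHypJoint_eq_of_perm (hperm : ∀ (S : ι → Z) (σ : Equiv.Perm ι), Q (S ∘ σ) = Q S)
    (i j : ι) : coordHypJoint P Q i = coordHypJoint P Q j := by
  funext z h
  set σ := Equiv.swap i j
  refine Fintype.sum_equiv (σ.arrowCongr (Equiv.refl Z)) _ _ fun S => ?_
  have hS : (σ.arrowCongr (Equiv.refl Z)) S = S ∘ σ := rfl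
  simp only [hS, sampleHypJoint, hperm, Function.comp_apply]
  rw [Equiv.prod_comp σ fun k => P (S k)]
  simp [σ]

lemma condIndepJoint_nonneg (hP0 : ∀ z, 0 ≤ P z) (hQ0 : ∀ S h, 0 ≤ Q S h) (S : ι → Z)
    (h : H) : 0 ≤ condIndepJoint P Q S h :=
  mul_nonneg (hypMarginal_nonneg hP0 hQ0 h) <| prod_nonneg fun i _ =>
    div_nonneg (coordHypJoint_nonneg hP0 hQ0 i (S i) h) (hypMarginal_nonneg hP0 hQ0 h)

lemma condIndepJoint_pos (hP0 : ∀ z, 0 ≤ P z) (hQ0 : ∀ S h, 0 ≤ Q S h) {S : ι → Z}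
    {h : H} (hS : 0 < sampleHypJoint P Q S h) : 0 < condIndepJoint P Q S h := by
  have hν := hS.trans_le (sampleHypJoint_le_hypMarginal hP0 hQ0 S h)
  have hμ : ∀ i, 0 < coordHypJoint P Q i (S i) h := fun i =>
    hS.trans_le (sampleHypJoint_le_coordHypJoint hP0 hQ0 i S h)
  exact mul_pos hν (prod_pos fun i _ => div_pos (hμ i) hν)

lemma sum_condIndepJoint (h : H) : ∑ S, condIndepJoint P Q S h = hypMarginal P Q h := by
  simp only [condIndepJoint, ← mul_sum]
  rw [← Fintype.prod_sum fun i z => coordHypJoint P Q i z h / hypMarginal P Q h]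
  simp only [← sum_div, sum_coordHypJoint]
  rcases eq_or_ne (hypMarginal P Q h) 0 with hν | hν
  · simp [hν]
  · simp [div_self hν]

variable [Fintype H]

noncomputable def coordHypInfo (P : Z → ℝ) (Q : (ι → Z) → H → ℝ) (i : ι) : ℝ :=
  klDivFin (uncurry (coordHypJoint P Q i)) (fun x => P x.1 * hypMarginal P Q x.2)

lemma sum_coordHypJoint_right (hP1 : ∑ z, P z = 1) (hQ1 : ∀ S, ∑ h, Q S h = 1)
    (i : ι) (z : Z) : ∑ h, coordHypJoint P Q i z h = P z := by
  have hsplit : ∀ S : ι → Z, (if S i = z then ∏ j, P (S j) else 0)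
      = ∏ j, if j = i then (if S j = z then P (S j) else 0) else P (S j) := by
    intro S
    split_ifs with hS
    · exact prod_congr rfl fun j _ => by split_ifs with hj <;> simp_all
    · exact (prod_eq_zero (mem_univ i) (by simp [hS])).symm
  simp only [coordHypJoint, sampleHypJoint]
  rw [sum_comm]
  simp only [← ite_zero_mul, ← mul_sum, hQ1, mul_one, hsplit]
  rw [← Fintype.prod_sum fun j (x : Z) => if j = i then (if x = z then P x else 0) else P x]
  simp [hP1]

lemma sum_coordHypJoint_mul (i : ι) (f : Z → H → ℝ) :
    ∑ z, ∑ h, coordHypJoint P Q i z h * f z h =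
      ∑ S, ∑ h, sampleHypJoint P Q S h * f (S i) h := by
  simp only [coordHypJoint, sum_mul, ite_mul, zero_mul]
  rw [sum_comm]
  conv_lhs => enter [2, h]; rw [sum_comm]
  rw [sum_comm]
  simp

lemma sampleHypInfo_eq_sum_coordHypInfo_add (hP0 : ∀ z, 0 ≤ P z) (hQ0 : ∀ S h, 0 ≤ Q S h) :
    sampleHypInfo P Q = ∑ i, coordHypInfo P Q i +
      klDivFin (uncurry (sampleHypJoint P Q)) (uncurry (condIndepJoint P Q)) := by
  have key : ∀ S h, sampleHypJoint P Q S h *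
      log (sampleHypJoint P Q S h / ((∏ i, P (S i)) * hypMarginal P Q h)) =
      ∑ i, sampleHypJoint P Q S h *
        log (coordHypJoint P Q i (S i) h / (P (S i) * hypMarginal P Q h)) +
      sampleHypJoint P Q S h * log (sampleHypJoint P Q S h / condIndepJoint P Q S h) := by
    intro S h
    rcases (sampleHypJoint_nonneg hP0 hQ0 S h).eq_or_lt with hS | hS
    · simp [← hS]
    have hν := hS.trans_le (sampleHypJoint_le_hypMarginal hP0 hQ0 S h)
    have hμ : ∀ i, 0 < coordHypJoint P Q i (S i) h := fun i =>
      hS.trans_le (sampleHypJoint_le_coordHypJoint hP0 hQ0 i S h)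
    have hP : ∀ i, 0 < P (S i) := fun i => (hP0 _).lt_of_ne fun h0 =>
      hS.ne' (by rw [sampleHypJoint, prod_eq_zero (mem_univ i) h0.symm, zero_mul])
    have hμP : ∀ i, 0 < coordHypJoint P Q i (S i) h / (P (S i) * hypMarginal P Q h) :=
      fun i => div_pos (hμ i) (mul_pos (hP i) hν)
    have := condIndepJoint_pos hP0 hQ0 hS
    have := prod_pos fun i (_ : i ∈ univ) => hμ i
    have := prod_pos fun i (_ : i ∈ univ) => hP i
    have hsplit : sampleHypJoint P Q S h / ((∏ i, P (S i)) * hypMarginal P Q h) =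
        (∏ i, coordHypJoint P Q i (S i) h / (P (S i) * hypMarginal P Q h)) *
          (sampleHypJoint P Q S h / condIndepJoint P Q S h) := by
      simp only [condIndepJoint, prod_div_distrib, prod_mul_distrib]
      field_simp
    rw [hsplit, log_mul (prod_pos fun i _ => hμP i).ne' (by positivity),
      log_prod fun i _ => (hμP i).ne', mul_add, mul_sum]
  simp only [sampleHypInfo, coordHypInfo, klDivFin, Fintype.sum_prod_type, uncurry_apply_pair,
    key, sum_add_distrib, sum_coordHypJoint_mul]
  conv_lhs => enter [1, 2, S]; rw [sum_comm]
  rw [sum_comm]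

lemma sum_coordHypInfo_le_sampleHypInfo (hP0 : ∀ z, 0 ≤ P z) (hQ0 : ∀ S h, 0 ≤ Q S h) :
    ∑ i, coordHypInfo P Q i ≤ sampleHypInfo P Q := by
  rw [sampleHypInfo_eq_sum_coordHypInfo_add hP0 hQ0, le_add_iff_nonneg_right]
  have hmass : ∑ x, uncurry (condIndepJoint P Q) x = ∑ x, uncurry (sampleHypJoint P Q) x := by
    simp only [Fintype.sum_prod_type, uncurry_apply_pair]
    rw [sum_comm, sum_comm (f := sampleHypJoint P Q)]
    simp only [sum_condIndepJoint, hypMarginal]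
  have hgibbs := sum_sub_sum_le_klDivFin (p := uncurry (condIndepJoint P Q))
    (q := uncurry (sampleHypJoint P Q)) (fun x => condIndepJoint_nonneg hP0 hQ0 x.1 x.2)
    (fun x => sampleHypJoint_nonneg hP0 hQ0 x.1 x.2) fun x hx =>
      ((sampleHypJoint_nonneg hP0 hQ0 x.1 x.2).eq_or_lt.resolve_right fun hS =>
        (condIndepJoint_pos hP0 hQ0 hS).ne' hx).symm
  linarith

lemma card_mul_coordHypInfo_le_sum_negMulLog (hP0 : ∀ z, 0 ≤ P z) (hQ0 : ∀ S h, 0 ≤ Q S h)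
    (hQ1 : ∀ S, ∑ h, Q S h = 1)
    (hperm : ∀ (S : ι → Z) (σ : Equiv.Perm ι), Q (S ∘ σ) = Q S) (i : ι) :
    Fintype.card ι * coordHypInfo P Q i ≤ ∑ h, negMulLog (hypMarginal P Q h) :=
  calc _ = ∑ j, coordHypInfo P Q j := by simp [coordHypInfo, coordHypJoint_eq_of_perm hperm _ i]
    _ ≤ sampleHypInfo P Q := sum_coordHypInfo_le_sampleHypInfo hP0 hQ0
    _ ≤ _ := sampleHypInfo_le_sum_negMulLog hP0 hQ0 hQ1

lemma tv_coordHypJoint_le_sqrt_coordHypInfo (hP0 : ∀ z, 0 ≤ P z) (hP1 : ∑ z, P z = 1)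
    (hQ0 : ∀ S h, 0 ≤ Q S h) (hQ1 : ∀ S, ∑ h, Q S h = 1) (i : ι) :
    tv (fun x => P x.1 * hypMarginal P Q x.2) (uncurry (coordHypJoint P Q i)) ≤
      √(coordHypInfo P Q i / 2) := by
  refine tv_le_sqrt_klDivFin (fun x => mul_nonneg (hP0 x.1) (hypMarginal_nonneg hP0 hQ0 x.2))
    (fun x => coordHypJoint_nonneg hP0 hQ0 i x.1 x.2) ?_ ?_ fun x hx => ?_
  · simp [Fintype.sum_prod_type, ← mul_sum, sum_hypMarginal hP1 hQ1, hP1]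
  · rw [Fintype.sum_prod_type, sum_comm]
    simp [sum_coordHypJoint, sum_hypMarginal hP1 hQ1]
  · rcases mul_eq_zero.1 hx with hz | hh
    · exact coordHypJoint_eq_zero_of_eq_zero hz i x.2
    · exact le_antisymm (hh ▸ coordHypJoint_le_hypMarginal hP0 hQ0 i x.1 x.2)
        (coordHypJoint_nonneg hP0 hQ0 i x.1 x.2)

end LearningMachine

section TrainingExample

variable {Z H : Type*} [Fintype Z] [DecidableEq Z] {m : ℕ} {P : Z → ℝ}
  {Q : (Fin m → Z) → H → ℝ}

lemma jointZH_eq_coordHypJoint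
    (hperm : ∀ (S : Fin m → Z) (σ : Equiv.Perm (Fin m)), Q (S ∘ σ) = Q S) (i : Fin m) :
    jointZH m P Q = coordHypJoint P Q i := by
  funext z h
  have hm : (m : ℝ) ≠ 0 := Nat.cast_ne_zero.2 i.pos.ne'
  rw [jointZH, tsum_fintype, Subsingleton.elim (Classical.decEq Z) ‹_›]
  calc ∑ S, prodPMF m P S * (1 / m * ∑ j, if S j = z then 1 else 0) * Q S h
      = 1 / m * ∑ j, coordHypJoint P Q j z h := by
        simp only [coordHypJoint, sampleHypJoint, prodPMF, mul_sum, sum_mul]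
        rw [sum_comm]
        refine sum_congr rfl fun j _ => sum_congr rfl fun S _ => ?_
        split_ifs <;> ring
    _ = coordHypJoint P Q i z h := by
        simp [coordHypJoint_eq_of_perm hperm _ i, hm]

lemma affinity_eq_tv [Fintype H] (hP1 : ∑ z, P z = 1) (hQ1 : ∀ S, ∑ h, Q S h = 1)
    (hperm : ∀ (S : Fin m → Z) (σ : Equiv.Perm (Fin m)), Q (S ∘ σ) = Q S) (i : Fin m) :
    affinity m P Q =
      tv (fun x => P x.1 * hypMarginal P Q x.2) (uncurry (coordHypJoint P Q i)) := by
  have hZ : ∀ z, margZ m P Q z = P z := fun z => by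
    simp [margZ, jointZH_eq_coordHypJoint hperm i, sum_coordHypJoint_right hP1 hQ1]
  have hH : ∀ h, margH m P Q h = hypMarginal P Q h := fun h => by
    simp [margH, jointZH_eq_coordHypJoint hperm i, sum_coordHypJoint]
  simp only [affinity, hZ, hH, jointZH_eq_coordHypJoint hperm i]
  rfl

end TrainingExample

/-- Corollary 5: for a permutation-invariant learning machine on
finite alphabets, the mutual affinity is bounded by `√(𝐇(H)/(2m))`, which in
turn is at most `√(log|H|/(2m))`, where `𝐇(H)` is the Shannon entropy (in
nats) of the inferred hypothesis. -/
theorem stmt16 {Z H : Type*} [Fintype Z] [Fintype H] (m : ℕ) (hm : 1 ≤ m)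
    (P : Z → ℝ) (hP : IsPMF P)
    (Q : (Fin m → Z) → H → ℝ) (hQ : ∀ S, IsPMF (Q S))
    (hperm : ∀ (S : Fin m → Z) (σ : Equiv.Perm (Fin m)), Q (S ∘ σ) = Q S)
    (νH : H → ℝ) (hνH : ∀ h, νH h = ∑' S : Fin m → Z, prodPMF m P S * Q S h)
    (ent : ℝ)
    (hent : ent = -∑' h : H, if 0 < νH h then νH h * Real.log (νH h) else 0) :
    affinity m P Q ≤ Real.sqrt (ent / (2 * m)) ∧
      Real.sqrt (ent / (2 * m)) ≤
        Real.sqrt (Real.log (Fintype.card H) / (2 * m)) := by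
  classical
  have hP1 := hP.sum_eq_one
  have hQ0 : ∀ S h, 0 ≤ Q S h := fun S => (hQ S).1
  have hQ1 : ∀ S, ∑ h, Q S h = 1 := fun S => (hQ S).sum_eq_one
  have hν : νH = hypMarginal P Q := funext fun h => (hνH h).trans (tsum_fintype _)
  have hent' : ent = ∑ h, negMulLog (hypMarginal P Q h) := by
    rw [hent, hν, neg_tsum_ite_mul_log_eq_sum_negMulLog (hypMarginal_nonneg hP.1 hQ0)]
  have hlog : ent ≤ log (Fintype.card H) :=
    hent' ▸ sum_negMulLog_le_log_card (hypMarginal_nonneg hP.1 hQ0) (sum_hypMarginal hP1 hQ1)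
  let i₀ : Fin m := ⟨0, hm⟩
  have hinfo := card_mul_coordHypInfo_le_sum_negMulLog hP.1 hQ0 hQ1 hperm i₀
  rw [Fintype.card_fin, ← hent'] at hinfo
  have hm0 : (0 : ℝ) < m := by exact_mod_cast hm
  refine ⟨?_, by gcongr⟩
  calc affinity m P Q = _ := affinity_eq_tv hP1 hQ1 hperm i₀
    _ ≤ √(coordHypInfo P Q i₀ / 2) :=
        tv_coordHypJoint_le_sqrt_coordHypInfo hP.1 hP1 hQ0 hQ1 i₀
    _ ≤ √(ent / (2 * m)) := by
        refine Real.sqrt_le_sqrt ?_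
        rw [div_le_div_iff₀ two_pos (by positivity)]
        nlinarith
end

section
/- (Lazy learner affinity; core of Theorem 6.) Let Z be a finite alphabet with n = |Z| ≥ 1, let m ≥ 1, let P be the uniform probability mass function on Z, and let the learning machine be the lazy learner whose hypothesis is the type (empirical count vector) of the training set: Q assigns to each S ∈ Z^m the point mass at (N_z(S))_{z∈Z}. Then the mutual affinity between a uniformly drawn training example Z_trn and the hypothesis equals I_P(Z_trn, H) = (n/(2m)) · ∑_{k=0}^{m} C(m,k) · (1/n)^k · (1−1/n)^{m−k} · |k − m/n|, where C(m,k) is the binomial coefficient. -/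
/-! The hypothesis of the lazy learner is the type `N(S)` of the training set, and given
`N(S) = h` the training example is distributed as `h / m`. So the joint law of `(Z_trn, H)` is
`(h z / m) · w(h)` with `w` the law of the type, its marginals are `P` and `w`, and the affinity
is the expected total variation distance `½ ∑_z |P z - N_z(S) / m|` between `P` and the empirical
distribution. Each count `N_z(S)` is binomial with parameters `m` and `P z`, as the generating
function `∑_S P^{⊗m}(S) X^{N_z(S)} = (P z · X + 1 - P z)^m` shows. Under the uniform law the `n`
summands coincide. -/

open Finset Polynomial

theorem coeff_C_mul_X_add_C_pow {R : Type*} [CommSemiring R] (a b : R) (n k : ℕ) :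
    ((C a * X + C b) ^ n).coeff k = a ^ k * b ^ (n - k) * n.choose k := by
  rw [add_pow, finsetSum_coeff]
  simp only [mul_pow, ← C_pow, ← C_eq_natCast, mul_assoc, mul_comm (X ^ _), coeff_C_mul,
    coeff_X_pow, mul_ite, mul_one, mul_zero, sum_ite_eq, mem_range]
  split_ifs with hk
  · rfl
  · rw [Nat.choose_eq_zero_of_lt (by omega), Nat.cast_zero, mul_zero, mul_zero]

section

variable {Z : Type*} {m : ℕ}

def empiricalCount [DecidableEq Z] (S : Fin m → Z) (z : Z) : ℕ := #{i | S i = z}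

theorem empiricalCount_le [DecidableEq Z] (S : Fin m → Z) (z : Z) : empiricalCount S z ≤ m :=
  (card_filter_le _ _).trans_eq (card_fin m)

theorem sum_empiricalCount [Fintype Z] [DecidableEq Z] (S : Fin m → Z) :
    ∑ z, empiricalCount S z = m := by
  simpa [empiricalCount] using
    (card_eq_sum_card_fiberwise (f := S) (s := univ) (t := univ) fun _ _ => mem_univ _).symm

theorem sum_C_prodPMF_mul_X_pow_empiricalCount [Fintype Z] [DecidableEq Z] {P : Z → ℝ}
    (hP : ∑ y, P y = 1) (z : Z) :
    ∑ S : Fin m → Z, C (prodPMF m P S) * X ^ empiricalCount S z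
      = (C (P z) * X + C (1 - P z)) ^ m := by
  have hterm (y : Z) : C (P y) * X ^ (if y = z then 1 else 0) =
      if y = z then C (P z) * X else C (P y) := by
    split_ifs with h <;> simp [h]
  have hsum : ∑ y, C (P y) * X ^ (if y = z then 1 else 0) = C (P z) * X + C (1 - P z) := by
    simp only [hterm, Finset.sum_ite, filter_eq', mem_univ, if_true, sum_singleton]
    rw [← map_sum, filter_ne', sum_erase_eq_sub (mem_univ z), hP]
  have hpow (S : Fin m → Z) :
      (X : ℝ[X]) ^ empiricalCount S z = ∏ i, X ^ (if S i = z then 1 else 0) := by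
    rw [prod_pow_eq_pow_sum, empiricalCount, card_filter]
  simp only [prodPMF, hpow, map_prod, ← prod_mul_distrib]
  rw [← Fintype.prod_sum fun (_ : Fin m) y => C (P y) * X ^ (if y = z then 1 else 0), hsum,
    prod_const, card_univ, Fintype.card_fin]

theorem sum_prodPMF [Fintype Z] {P : Z → ℝ} (hP : ∑ y, P y = 1) :
    ∑ S : Fin m → Z, prodPMF m P S = 1 := by
  simp [prodPMF, ← Fintype.prod_sum, hP]

theorem sum_prodPMF_ite_empiricalCount_eq [Fintype Z] [DecidableEq Z] {P : Z → ℝ}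
    (hP : ∑ y, P y = 1) (z : Z) (k : ℕ) :
    ∑ S : Fin m → Z, (if empiricalCount S z = k then prodPMF m P S else 0)
      = P z ^ k * (1 - P z) ^ (m - k) * m.choose k := by
  have := congr_arg (coeff · k) (sum_C_prodPMF_mul_X_pow_empiricalCount (m := m) hP z)
  rw [coeff_C_mul_X_add_C_pow] at this
  simpa [finsetSum_coeff, coeff_C_mul_X_pow, eq_comm (a := k)] using this

theorem sum_prodPMF_mul_empiricalCount [Fintype Z] [DecidableEq Z] {P : Z → ℝ}
    (hP : ∑ y, P y = 1) (z : Z) :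
    ∑ S : Fin m → Z, prodPMF m P S * empiricalCount S z = m * P z := by
  -- the mean of the binomial law: differentiate the generating function at `X = 1`
  have := congr_arg (fun p => (derivative p).eval 1)
    (sum_C_prodPMF_mul_X_pow_empiricalCount (m := m) hP z)
  simpa [derivative_pow, eval_finsetSum] using this

theorem sum_prodPMF_mul_comp_empiricalCount [Fintype Z] [DecidableEq Z] {P : Z → ℝ}
    (hP : ∑ y, P y = 1) (z : Z) (F : ℕ → ℝ) :
    ∑ S : Fin m → Z, prodPMF m P S * F (empiricalCount S z)
      = ∑ k ∈ range (m + 1), P z ^ k * (1 - P z) ^ (m - k) * m.choose k * F k := by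
  rw [← sum_fiberwise_of_maps_to (g := (empiricalCount · z)) (t := range (m + 1))
    fun S _ => mem_range_succ_iff.mpr (empiricalCount_le S z)]
  refine sum_congr rfl fun k _ => ?_
  rw [← sum_prodPMF_ite_empiricalCount_eq hP z k, ← sum_filter, sum_mul]
  exact sum_congr rfl fun S hS => by rw [(mem_filter.mp hS).2]

theorem tsum_sum_ite_eq {α β : Type*} [Fintype α] [DecidableEq β] (f : α → β)
    (g : β → α → ℝ) :
    ∑' b, ∑ a, (if b = f a then g b a else 0) = ∑ a, g (f a) a := by
  rw [Summable.tsum_finsetSum fun a _ => (hasSum_ite_eq (f a) (g (f a) a)).summable.congr ?_]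
  · exact sum_congr rfl fun a _ => by
      rw [tsum_eq_single (f a) fun b hb => if_neg hb, if_pos rfl]
  · intro b; split_ifs with h <;> simp [h]

theorem one_sub_sum_min_eq {ι : Type*} [Fintype ι] {p q : ι → ℝ}
    (hp : ∑ i, p i = 1) (hq : ∑ i, q i = 1) :
    1 - ∑ i, min (p i) (q i) = (∑ i, |p i - q i|) / 2 := by
  have hmin (i : ι) : min (p i) (q i) = (p i + q i - |p i - q i|) / 2 := by
    linarith [min_add_max (p i) (q i), max_sub_min_eq_abs' (p i) (q i)]
  simp only [hmin, ← sum_div, sum_sub_distrib, sum_add_distrib, hp, hq]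
  ring

noncomputable def typePMF [Fintype Z] [DecidableEq Z] (m : ℕ) (P : Z → ℝ) (h : Z → ℕ) :
    ℝ :=
  ∑ S : Fin m → Z, if h = empiricalCount S then prodPMF m P S else 0

theorem typePMF_nonneg [Fintype Z] [DecidableEq Z] {P : Z → ℝ} (hP0 : ∀ y, 0 ≤ P y)
    (h : Z → ℕ) : 0 ≤ typePMF m P h :=
  sum_nonneg fun _ _ => ite_nonneg (prod_nonneg fun _ _ => hP0 _) le_rfl

section LazyLearner

variable [Fintype Z] [DecidableEq Z] {P : Z → ℝ} {Q : (Fin m → Z) → (Z → ℕ) → ℝ}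

theorem jointZH_of_lazy (hQ : ∀ S h, Q S h = if h = empiricalCount S then 1 else 0)
    (z : Z) (h : Z → ℕ) : jointZH m P Q z h = h z / m * typePMF m P h := by
  -- `jointZH` counts occurrences with the classical instance `Classical.decEq Z`.
  have hcount (S : Fin m → Z) : (haveI := Classical.decEq Z;
      ∑ i, if S i = z then (1 : ℝ) else 0) = empiricalCount S z := by
    rw [empiricalCount, natCast_card_filter]
    congr!
  simp only [jointZH, hcount, tsum_fintype, typePMF, mul_sum, hQ, mul_ite, mul_one, mul_zero]
  refine sum_congr rfl fun S _ => ?_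
  split_ifs with hS
  · subst hS
    ring
  · rfl

theorem margH_of_lazy (hQ : ∀ S h, Q S h = if h = empiricalCount S then 1 else 0)
    (hm : m ≠ 0) (h : Z → ℕ) : margH m P Q h = typePMF m P h := by
  rw [margH, tsum_fintype]
  simp only [jointZH_of_lazy hQ, ← sum_mul, ← sum_div]
  by_cases hh : ∃ S : Fin m → Z, h = empiricalCount S
  · obtain ⟨S, rfl⟩ := hh
    rw [← Nat.cast_sum, sum_empiricalCount, div_self (Nat.cast_ne_zero.mpr hm), one_mul]
  · push Not at hh
    simp [typePMF, hh]

theorem margZ_of_lazy (hQ : ∀ S h, Q S h = if h = empiricalCount S then 1 else 0)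
    (hP : ∑ y, P y = 1) (hm : m ≠ 0) (z : Z) : margZ m P Q z = P z := by
  simp only [margZ, jointZH_of_lazy hQ, typePMF, mul_sum, mul_ite, mul_zero]
  rw [tsum_sum_ite_eq]
  simp only [div_mul_eq_mul_div, ← sum_div, mul_comm (empiricalCount _ z : ℝ),
    sum_prodPMF_mul_empiricalCount hP]
  field_simp

theorem affinity_of_lazy (hQ : ∀ S h, Q S h = if h = empiricalCount S then 1 else 0)
    (hP0 : ∀ y, 0 ≤ P y) (hP : ∑ y, P y = 1) (hm : m ≠ 0) :
    affinity m P Q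
      = ∑ S : Fin m → Z, prodPMF m P S * (1 - ∑ z, min (P z) (empiricalCount S z / m)) := by
  have hmin (p : Z × (Z → ℕ)) :
      min (margZ m P Q p.1 * margH m P Q p.2) (jointZH m P Q p.1 p.2)
        = ∑ a : (Fin m → Z) × Z, if p = (a.2, empiricalCount a.1) then
            prodPMF m P a.1 * min (P p.1) (p.2 p.1 / m) else 0 := by
    obtain ⟨z, h⟩ := p
    rw [margZ_of_lazy hQ hP hm, margH_of_lazy hQ hm, jointZH_of_lazy hQ, mul_comm (P z),
      mul_comm (_ / _), ← mul_min_of_nonneg _ _ (typePMF_nonneg hP0 h), typePMF, sum_mul,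
      Fintype.sum_prod_type]
    refine sum_congr rfl fun S _ => ?_
    simp only [Prod.mk.injEq, ite_and, sum_ite_eq, mem_univ, if_true, ite_mul, zero_mul]
  rw [affinity, tv, tsum_congr hmin, tsum_sum_ite_eq]
  simp only [Fintype.sum_prod_type, mul_sub, mul_one, sum_sub_distrib, sum_prodPMF hP, mul_sum]

theorem affinity_of_lazy_eq_sum_binomial
    (hQ : ∀ S h, Q S h = if h = empiricalCount S then 1 else 0)
    (hP0 : ∀ y, 0 ≤ P y) (hP : ∑ y, P y = 1) (hm : m ≠ 0) :
    affinity m P Q = (∑ z, ∑ k ∈ range (m + 1),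
      P z ^ k * (1 - P z) ^ (m - k) * m.choose k * |P z - k / m|) / 2 := by
  have hfreq (S : Fin m → Z) : ∑ z, (empiricalCount S z : ℝ) / m = 1 := by
    rw [← sum_div, ← Nat.cast_sum, sum_empiricalCount, div_self (Nat.cast_ne_zero.mpr hm)]
  simp only [affinity_of_lazy hQ hP0 hP hm, one_sub_sum_min_eq hP (hfreq _), mul_div_assoc',
    ← sum_div, mul_sum]
  rw [sum_comm]
  exact congr_arg (· / 2) (sum_congr rfl fun z _ =>
    sum_prodPMF_mul_comp_empiricalCount hP z fun k => |P z - k / m|)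

end LazyLearner

end

/-- Lazy learner affinity, core of Theorem 6: for the lazy
learner whose hypothesis is the type (empirical count vector) of the training
set, under the uniform distribution on a finite alphabet of size `n`, the
mutual affinity equals
`(n/(2m)) · ∑_{k=0}^m C(m,k) (1/n)^k (1-1/n)^{m-k} |k - m/n|`. -/
theorem stmt18 {Z : Type*} [Fintype Z] [DecidableEq Z] (n m : ℕ)
    (hn : n = Fintype.card Z) (hn1 : 1 ≤ n) (hm : 1 ≤ m)
    (P : Z → ℝ) (hP : ∀ z, P z = 1 / (n : ℝ))
    (Q : (Fin m → Z) → (Z → ℕ) → ℝ)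
    (hQ : ∀ S h, Q S h =
      if h = fun z => (Finset.univ.filter fun i => S i = z).card then 1 else 0) :
    affinity m P Q = ((n : ℝ) / (2 * m)) * ∑ k ∈ Finset.range (m + 1),
      (m.choose k : ℝ) * (1 / (n : ℝ)) ^ k * (1 - 1 / (n : ℝ)) ^ (m - k) *
        |(k : ℝ) - (m : ℝ) / (n : ℝ)| := by
  have hn0 : (n : ℝ) ≠ 0 := by positivity
  have hm0 : (0 : ℝ) < m := by positivity
  have hP1 : ∑ z, P z = 1 := by simp [hP, ← hn, hn0]
  rw [affinity_of_lazy_eq_sum_binomial hQ (fun z => by rw [hP]; positivity) hP1 (by omega)]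
  simp only [hP, sum_const, card_univ, ← hn, nsmul_eq_mul, mul_sum, sum_div]
  refine sum_congr rfl fun k _ => ?_
  have habs : |1 / (n : ℝ) - k / m| = |(k : ℝ) - m / n| / m := by
    rw [← abs_of_pos hm0, ← abs_div, ← abs_neg, abs_of_pos hm0]
    congr 1
    field_simp
    ring
  rw [habs]
  field_simp
end

section
/- (Bernoulli empirical-average machine.) Let Z = {0,1}, let P be the Bernoulli pmf with P(1) = φ for φ ∈ [0,1], let m ≥ 1, and let the learning machine deterministically output the empirical average H = (1/m)∑_{i=1}^m S_i of the training set S ∈ {0,1}^m. Then the mutual affinity between a uniformly drawn training example Z_trn and H equals the mean deviation of the binomial distribution: I_P(Z_trn, H) = ∑_{k=0}^{m} C(m,k) · φ^k · (1−φ)^{m−k} · |φ − k/m|. Moreover, if m is even and φ = 1/2, this value equals m! / ( ((m/2)!)² · 2^{m+1} ). -/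
/-!
Writing `K` for the number of ones in the sample, the machine outputs `H = K/m` with
`K ~ Binomial(m, φ)`, and conditionally on `H = k/m` the example `Z_trn` is Bernoulli(`k/m`).
So the joint law puts mass `ν k · Bern(k/m)(z)` at `(z, k/m)`, while the product of the marginals
puts `ν k · Bern(φ)(z)` there, and `∑_z min (Bern(φ)(z)) (Bern(k/m)(z)) = 1 - |φ - k/m|`.
For `m = 2n` and `φ = 1/2` the identity `2 (n - k) C(2n,k) = (k+1) C(2n,k+1) - k C(2n,k)`
telescopes `∑_k C(2n,k) |n - k|` to `n C(2n,n)`.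
-/
open Finset Polynomial

noncomputable def bernoulliPMF (φ : ℝ) : Fin 2 → ℝ := ![1 - φ, φ]

noncomputable def binomialWeight (m : ℕ) (φ : ℝ) (k : ℕ) : ℝ :=
  m.choose k * φ ^ k * (1 - φ) ^ (m - k)

noncomputable def empiricalMeanMachine (m : ℕ) (S : Fin m → Fin 2) (h : ℝ) : ℝ :=
  if h = 1 / (m : ℝ) * ∑ i, ((S i : ℕ) : ℝ) then 1 else 0

section Binomial

variable {m : ℕ} {φ : ℝ}

theorem sum_bernoulliPMF (x : ℝ) : ∑ z, bernoulliPMF x z = 1 := by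
  simp [bernoulliPMF]

theorem min_bernoulliPMF_sum (x y : ℝ) :
    ∑ z, min (bernoulliPMF x z) (bernoulliPMF y z) = 1 - |x - y| := by
  simp only [bernoulliPMF, Fin.sum_univ_two, Matrix.cons_val_zero, Matrix.cons_val_one]
  rcases le_total x y with h | h
  · rw [min_eq_right (by linarith), min_eq_left h, abs_of_nonpos (by linarith)]; ring
  · rw [min_eq_left (by linarith), min_eq_right h, abs_of_nonneg (by linarith)]; ring

theorem binomialWeight_eq_eval (k : ℕ) :
    binomialWeight m φ k = (bernsteinPolynomial ℝ m k).eval φ := by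
  simp [binomialWeight, bernsteinPolynomial]

theorem binomialWeight_nonneg (hφ0 : 0 ≤ φ) (hφ1 : φ ≤ 1) (k : ℕ) :
    0 ≤ binomialWeight m φ k := by
  have := sub_nonneg.2 hφ1
  unfold binomialWeight
  positivity

theorem sum_binomialWeight : ∑ k ∈ range (m + 1), binomialWeight m φ k = 1 := by
  simp_rw [binomialWeight_eq_eval, ← eval_finsetSum, bernsteinPolynomial.sum, eval_one]

theorem sum_mul_binomialWeight :
    ∑ k ∈ range (m + 1), (k : ℝ) * binomialWeight m φ k = m * φ := by
  simpa [binomialWeight_eq_eval, eval_finsetSum] using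
    congrArg (eval φ) (bernsteinPolynomial.sum_smul (R := ℝ) m)

theorem sum_binomialWeight_mul_bernoulliPMF (hm : m ≠ 0) (z : Fin 2) :
    ∑ k ∈ range (m + 1), binomialWeight m φ k * bernoulliPMF ((k : ℝ) / m) z =
      bernoulliPMF φ z := by
  have hmean : ∑ k ∈ range (m + 1), binomialWeight m φ k * ((k : ℝ) / m) = φ := by
    simp_rw [mul_div_assoc', mul_comm (binomialWeight m φ _), ← sum_div, sum_mul_binomialWeight]
    field_simp
  fin_cases z
  · simp [bernoulliPMF, mul_sub, sum_sub_distrib, sum_binomialWeight, hmean]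
  · simpa [bernoulliPMF] using hmean

theorem sum_prod_bernoulliPMF_mul_apply_count (g : ℕ → ℝ) :
    ∑ S : Fin m → Fin 2, (∏ i, bernoulliPMF φ (S i)) * g (∑ i, (S i : ℕ)) =
      ∑ k ∈ range (m + 1), binomialWeight m φ k * g k := by
  classical
  let indicator (t : Finset (Fin m)) : Fin m → Fin 2 := fun i => if i ∈ t then 1 else 0
  have hcount (t) : ∑ i, (indicator t i : ℕ) = #t := by
    simp [indicator, apply_ite]
  have hprod (t) : ∏ i, bernoulliPMF φ (indicator t i) = φ ^ #t * (1 - φ) ^ (m - #t) := by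
    simp [indicator, apply_ite, bernoulliPMF, prod_ite, filter_not, card_univ_sdiff]
  calc ∑ S : Fin m → Fin 2, (∏ i, bernoulliPMF φ (S i)) * g (∑ i, (S i : ℕ))
      = ∑ t ∈ (univ : Finset (Fin m)).powerset, φ ^ #t * (1 - φ) ^ (m - #t) * g #t := by
        refine (sum_nbij' indicator (fun S => ({i | S i = 1} : Finset (Fin m)))
          ?_ ?_ ?_ ?_ ?_).symm
        · simp
        · simp
        · intro t _
          ext i
          simp [indicator]
        · intro S _
          funext i
          have := (S i).isLt
          simp only [indicator, mem_filter, mem_univ, true_and]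
          split_ifs with h <;> omega
        · intro t _
          rw [hprod, hcount]
    _ = ∑ k ∈ range (m + 1), binomialWeight m φ k * g k := by
        rw [sum_powerset_apply_card (fun k => φ ^ k * (1 - φ) ^ (m - k) * g k), card_univ,
          Fintype.card_fin]
        simp [binomialWeight, nsmul_eq_mul, mul_assoc]

end Binomial

theorem sum_choose_mul_abs_sub_central (n : ℕ) :
    ∑ k ∈ range (2 * n + 1), ((2 * n).choose k : ℝ) * |(n : ℝ) - k| =
      n * (2 * n).choose n := by
  set T : ℕ → ℝ := fun k => k * (2 * n).choose k
  have hstep {k : ℕ} (hk : k ≤ 2 * n) :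
      ((2 * n).choose k : ℝ) * (n - k) = (T (k + 1) - T k) / 2 := by
    have h := Nat.choose_succ_right_eq (2 * n) k
    rw [← Nat.cast_inj (R := ℝ)] at h
    push_cast [hk] at h
    simp only [T]
    push_cast
    linear_combination -h / 2
  have hT : T (2 * n + 1) = 0 := by simp [T]
  calc ∑ k ∈ range (2 * n + 1), ((2 * n).choose k : ℝ) * |(n : ℝ) - k|
      = ∑ k ∈ range n, (T (k + 1) - T k) / 2 +
          ∑ k ∈ Ico n (2 * n + 1), -((T (k + 1) - T k) / 2) := by
        rw [← sum_range_add_sum_Ico _ (by omega : n ≤ 2 * n + 1)]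
        congr 1
        · refine sum_congr rfl fun k hk => ?_
          have hk := mem_range.1 hk
          rw [abs_of_nonneg (sub_nonneg.2 (by exact_mod_cast hk.le)), hstep (by omega)]
        · refine sum_congr rfl fun k hk => ?_
          have hk := mem_Ico.1 hk
          rw [abs_of_nonpos (sub_nonpos.2 (by exact_mod_cast hk.1)), mul_neg, hstep (by omega)]
    _ = n * (2 * n).choose n := by
        rw [← sum_div, sum_range_sub, sum_neg_distrib, ← sum_div, sum_Ico_sub _ (by omega), hT]
        simp [T]
        ring

theorem sum_binomialWeight_half_mul_abs (n : ℕ) (hn : n ≠ 0) :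
    ∑ k ∈ range (2 * n + 1),
        binomialWeight (2 * n) (1 / 2) k * |1 / 2 - (k : ℝ) / (2 * n : ℕ)| =
      (2 * n).factorial / ((n.factorial : ℝ) ^ 2 * 2 ^ (2 * n + 1)) := by
  have hterm {k : ℕ} (hk : k ∈ range (2 * n + 1)) :
      binomialWeight (2 * n) (1 / 2) k * |1 / 2 - (k : ℝ) / (2 * n : ℕ)| =
        ((2 * n).choose k * |(n : ℝ) - k|) / (2 ^ (2 * n) * (2 * n)) := by
    have hk := mem_range.1 hk
    have hpow : (1 / 2 : ℝ) ^ k * (1 - 1 / 2) ^ (2 * n - k) = 1 / 2 ^ (2 * n) := by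
      rw [show (1 : ℝ) - 1 / 2 = 1 / 2 by norm_num, ← pow_add, Nat.add_sub_cancel' (by omega),
        one_div_pow]
    have habs : |1 / 2 - (k : ℝ) / (2 * n : ℕ)| = |(n : ℝ) - k| / (2 * n) := by
      rw [← abs_of_pos (by positivity : (0 : ℝ) < 2 * n), ← abs_div]
      congr 1
      push_cast
      field_simp
    rw [binomialWeight, mul_assoc ((2 * n).choose k : ℝ), hpow, habs]
    field_simp
  rw [sum_congr rfl fun k hk => hterm hk, ← sum_div, sum_choose_mul_abs_sub_central,
    Nat.cast_choose ℝ (by omega : n ≤ 2 * n), show 2 * n - n = n by omega]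
  field_simp
  ring

theorem tsum_eq_sum_of_eq_zero_off_image {α ι M : Type*} [AddCommMonoid M] [TopologicalSpace M]
    [DecidableEq α] {f : α → M} {e : ι → α} {s : Finset ι} (he : Set.InjOn e s)
    (hf : ∀ a ∉ s.image e, f a = 0) : ∑' a, f a = ∑ i ∈ s, f (e i) := by
  rw [tsum_eq_sum hf, sum_image he]

section EmpiricalMean

variable {m : ℕ} {φ : ℝ}

theorem empiricalFrequency_eq_bernoulliPMF [dec : DecidableEq (Fin 2)] (hm : m ≠ 0)
    (S : Fin m → Fin 2) (z : Fin 2) :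
    1 / (m : ℝ) * ∑ i, (if S i = z then (1 : ℝ) else 0) =
      bernoulliPMF ((∑ i, (S i : ℕ) : ℕ) / m) z := by
  have hpoint (a : Fin 2) : (if a = z then (1 : ℝ) else 0) = bernoulliPMF (a : ℕ) z := by
    fin_cases a <;> fin_cases z <;> simp [bernoulliPMF]
  simp_rw [hpoint]
  fin_cases z
  · simp [bernoulliPMF, sum_sub_distrib]
    field_simp
  · simp [bernoulliPMF]
    ring

theorem natCast_div_injective (hm : m ≠ 0) : Function.Injective fun k : ℕ => (k : ℝ) / m := by
  intro j k h
  exact_mod_cast (div_left_inj' (Nat.cast_ne_zero.2 hm : (m : ℝ) ≠ 0)).1 h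

theorem jointZH_empiricalMeanMachine (hm : m ≠ 0) (z : Fin 2) (h : ℝ) :
    jointZH m (bernoulliPMF φ) (empiricalMeanMachine m) z h =
      ∑ k ∈ range (m + 1),
        binomialWeight m φ k * bernoulliPMF ((k : ℝ) / m) z * if h = k / m then 1 else 0 := by
  have hlaw := sum_prod_bernoulliPMF_mul_apply_count (m := m) (φ := φ)
    fun k => bernoulliPMF ((k : ℝ) / m) z * if h = k / m then 1 else 0
  simp only [← mul_assoc] at hlaw
  rw [← hlaw, jointZH, tsum_fintype]
  refine sum_congr rfl fun S _ => ?_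
  -- `jointZH` decides `S i = z` classically, so that instance has to be passed by hand.
  rw [empiricalFrequency_eq_bernoulliPMF (dec := Classical.decEq _) hm, empiricalMeanMachine,
    prodPMF]
  push_cast
  ring_nf

theorem jointZH_empiricalMeanMachine_div (hm : m ≠ 0) (z : Fin 2) {k : ℕ}
    (hk : k ∈ range (m + 1)) :
    jointZH m (bernoulliPMF φ) (empiricalMeanMachine m) z (k / m) =
      binomialWeight m φ k * bernoulliPMF ((k : ℝ) / m) z := by
  simp [jointZH_empiricalMeanMachine hm, (natCast_div_injective hm).eq_iff, hk]

theorem jointZH_empiricalMeanMachine_of_notMem (hm : m ≠ 0) (z : Fin 2) {h : ℝ}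
    (hh : h ∉ (range (m + 1)).image fun k : ℕ => (k : ℝ) / m) :
    jointZH m (bernoulliPMF φ) (empiricalMeanMachine m) z h = 0 := by
  rw [jointZH_empiricalMeanMachine hm]
  refine sum_eq_zero fun k hk => ?_
  rw [if_neg fun e => hh (mem_image.2 ⟨k, hk, e.symm⟩), mul_zero]

theorem margH_empiricalMeanMachine_div (hm : m ≠ 0) {k : ℕ} (hk : k ∈ range (m + 1)) :
    margH m (bernoulliPMF φ) (empiricalMeanMachine m) (k / m) = binomialWeight m φ k := by
  simp_rw [margH, tsum_fintype, jointZH_empiricalMeanMachine_div hm _ hk, ← mul_sum,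
    sum_bernoulliPMF, mul_one]

theorem margH_empiricalMeanMachine_of_notMem (hm : m ≠ 0) {h : ℝ}
    (hh : h ∉ (range (m + 1)).image fun k : ℕ => (k : ℝ) / m) :
    margH m (bernoulliPMF φ) (empiricalMeanMachine m) h = 0 := by
  simp [margH, jointZH_empiricalMeanMachine_of_notMem hm _ hh]

theorem margZ_empiricalMeanMachine (hm : m ≠ 0) (z : Fin 2) :
    margZ m (bernoulliPMF φ) (empiricalMeanMachine m) z = bernoulliPMF φ z := by
  rw [margZ, tsum_eq_sum_of_eq_zero_off_image (natCast_div_injective hm).injOn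
    fun h hh => jointZH_empiricalMeanMachine_of_notMem hm z hh,
    sum_congr rfl fun k hk => jointZH_empiricalMeanMachine_div hm z hk,
    sum_binomialWeight_mul_bernoulliPMF hm]

theorem affinity_empiricalMeanMachine (hm : m ≠ 0) (hφ0 : 0 ≤ φ) (hφ1 : φ ≤ 1) :
    affinity m (bernoulliPMF φ) (empiricalMeanMachine m) =
      ∑ k ∈ range (m + 1), binomialWeight m φ k * |φ - k / m| := by
  let e : Fin 2 × ℕ → Fin 2 × ℝ := fun p => (p.1, (p.2 : ℝ) / m)
  have he : Set.InjOn e ↑(univ ×ˢ range (m + 1) : Finset (Fin 2 × ℕ)) :=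
    (Function.Injective.prodMap Function.injective_id (natCast_div_injective hm)).injOn
  rw [affinity, tv, tsum_eq_sum_of_eq_zero_off_image he ?off, sum_product_right]
  case off =>
    rintro ⟨z, h⟩ hzh
    have hh : h ∉ (range (m + 1)).image fun k : ℕ => (k : ℝ) / m := fun hh => hzh <| by
      obtain ⟨k, hk, rfl⟩ := mem_image.1 hh
      exact mem_image.2 ⟨(z, k), mem_product.2 ⟨mem_univ z, hk⟩, rfl⟩
    simp [margH_empiricalMeanMachine_of_notMem hm hh,
      jointZH_empiricalMeanMachine_of_notMem hm z hh]
  calc _ = 1 - ∑ k ∈ range (m + 1), binomialWeight m φ k *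
          ∑ z, min (bernoulliPMF φ z) (bernoulliPMF ((k : ℝ) / m) z) := by
        congr 1
        refine sum_congr rfl fun k hk => ?_
        rw [mul_sum]
        refine sum_congr rfl fun z _ => ?_
        rw [margZ_empiricalMeanMachine hm, margH_empiricalMeanMachine_div hm hk,
          jointZH_empiricalMeanMachine_div hm _ hk, mul_comm (bernoulliPMF φ z),
          mul_min_of_nonneg _ _ (binomialWeight_nonneg hφ0 hφ1 k)]
    _ = ∑ k ∈ range (m + 1), binomialWeight m φ k * |φ - k / m| := by
        simp_rw [min_bernoulliPMF_sum, mul_sub, mul_one, sum_sub_distrib, sum_binomialWeight]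
        ring

end EmpiricalMean

/-- Bernoulli empirical-average machine: for observations in
`{0,1}` with `P(1) = φ` and the machine that deterministically outputs the
empirical average of the training set, the mutual affinity equals the mean
deviation of the binomial distribution
`∑_{k=0}^m C(m,k) φ^k (1-φ)^{m-k} |φ - k/m|`; moreover, if `m` is even and
`φ = 1/2`, this value equals `m!/(((m/2)!)²·2^{m+1})`. -/
theorem stmt19 (m : ℕ) (hm : 1 ≤ m) (φ : ℝ) (hφ0 : 0 ≤ φ) (hφ1 : φ ≤ 1)
    (P : Fin 2 → ℝ) (hP1 : P 1 = φ) (hP0 : P 0 = 1 - φ)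
    (Q : (Fin m → Fin 2) → ℝ → ℝ)
    (hQ : ∀ S h, Q S h =
      if h = (1 / (m : ℝ)) * ∑ i, ((S i : ℕ) : ℝ) then 1 else 0) :
    affinity m P Q = (∑ k ∈ Finset.range (m + 1),
        (m.choose k : ℝ) * φ ^ k * (1 - φ) ^ (m - k) * |φ - (k : ℝ) / (m : ℝ)|) ∧
      (Even m → φ = 1 / 2 →
        affinity m P Q =
          (m.factorial : ℝ) / (((m / 2).factorial : ℝ) ^ 2 * 2 ^ (m + 1))) := by
  obtain rfl : P = bernoulliPMF φ := by
    funext z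
    fin_cases z <;> simp [bernoulliPMF, hP0, hP1]
  obtain rfl : Q = empiricalMeanMachine m := funext₂ hQ
  have haffinity := affinity_empiricalMeanMachine (Nat.one_le_iff_ne_zero.1 hm) hφ0 hφ1
  refine ⟨haffinity, ?_⟩
  rintro ⟨n, rfl⟩ rfl
  rw [← two_mul] at haffinity ⊢
  rw [haffinity, Nat.mul_div_cancel_left n two_pos]
  exact sum_binomialWeight_half_mul_abs n (by omega)
end
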